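/- arXiv:2412.17152 — 8 statements merged into one kernel-verified Lean document; each statement's English description precedes it below -/
import Mathlib

section
/- Let d ∈ ℕ, b ∈ ℝ^d, and let F : ℝ^d → ℝ be given by a finite Taylor-type expansion around b: F(x) = Σ_{κ ∈ A} a_κ · Π_{i=1}^d (x_i − b_i)^{κ_i}, where A ⊆ ℕ^d is finite and a_κ ∈ ℝ. For S ⊆ {1,…,d} define the baseline value function F_S^{(b)}(x) := F(y) where y_i = x_i for i ∈ S and y_i = b_i for i ∉ S, and define the b-fANOVA effect f_S^{(b)}(x) := Σ_{T ⊆ S} (-1)^{|S|-|T|} F_T^{(b)}(x). Then for every S and every x ∈ ℝ^d, f_S^{(b)}(x) = Σ_{κ ∈ A with supp(κ) = S} a_κ · Π_{i=1}^d (x_i − b_i)^{κ_i}, where supp(κ) := {i : κ_i > 0}. (Theorem 1: the b-fANOVA effect f_S^{(b)} equals the sum of exactly those Taylor interaction terms whose degree vector has support S.) -/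
open Finset

/-!
The b-fANOVA effect `F ↦ f_S^{(b)}` is linear in `F`, so it suffices to compute it on a single
monomial `∏ i, (y i - b i) ^ κ i`. For a product `∏ i, φ i (y i)` the alternating sum over
`T ⊆ S` is the expansion of `∏ i ∈ S, (φ i (x i) - φ i (b i))`, the coordinates outside `S`
contributing the constant `∏ i ∉ S, φ i (b i)`. For the monomial, `φ i (b i) = 0 ^ κ i`, so this
vanishes unless `κ i > 0` exactly for `i ∈ S`.
-/

variable {ι R : Type*} [DecidableEq ι] [CommRing R]

/-- `T.piecewise x b` is the point `(x_T, b_{-T})`. -/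
def bfanovaEffect (F : (ι → R) → R) (b : ι → R) (S : Finset ι) (x : ι → R) : R :=
  ∑ T ∈ S.powerset, (-1) ^ (#S - #T) * F (T.piecewise x b)

theorem bfanovaEffect_sum {α : Type*} (A : Finset α) (a : α → R) (G : α → (ι → R) → R)
    (b : ι → R) (S : Finset ι) (x : ι → R) :
    bfanovaEffect (fun y => ∑ κ ∈ A, a κ * G κ y) b S x =
      ∑ κ ∈ A, a κ * bfanovaEffect (G κ) b S x := by
  simp only [bfanovaEffect, mul_sum]
  rw [sum_comm]
  exact sum_congr rfl fun κ _ => sum_congr rfl fun T _ => mul_left_comm _ _ _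

variable [Fintype ι]

theorem bfanovaEffect_prod (φ : ι → R → R) (b : ι → R) (S : Finset ι) (x : ι → R) :
    bfanovaEffect (fun y => ∏ i, φ i (y i)) b S x =
      (∏ i ∈ S, (φ i (x i) - φ i (b i))) * ∏ i ∈ Sᶜ, φ i (b i) := by
  simp only [sub_eq_add_neg, prod_add, sum_mul, bfanovaEffect]
  refine sum_congr rfl fun T hT => ?_
  have hTS : T ⊆ S := mem_powerset.mp hT
  have hin : ∏ i ∈ S, φ i (T.piecewise x b i) =
      (∏ i ∈ T, φ i (x i)) * ∏ i ∈ S \ T, φ i (b i) := by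
    rw [← prod_sdiff hTS, mul_comm]
    congr 1 <;> refine prod_congr rfl fun i hi => ?_
    · rw [piecewise_eq_of_mem _ _ _ hi]
    · rw [piecewise_eq_of_notMem _ _ _ (mem_sdiff.mp hi).2]
  have hout : ∏ i ∈ Sᶜ, φ i (T.piecewise x b i) = ∏ i ∈ Sᶜ, φ i (b i) :=
    prod_congr rfl fun i hi => by
      rw [piecewise_eq_of_notMem _ _ _ fun hiT => mem_compl.mp hi (hTS hiT)]
  rw [← prod_mul_prod_compl S, hin, hout, prod_neg, card_sdiff_of_subset hTS]
  ring

theorem bfanovaEffect_monomial (b x : ι → R) (κ : ι → ℕ) (S : Finset ι) :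
    bfanovaEffect (fun y => ∏ i, (y i - b i) ^ κ i) b S x =
      if univ.filter (fun i => 0 < κ i) = S then ∏ i, (x i - b i) ^ κ i else 0 := by
  rw [bfanovaEffect_prod (fun i t => (t - b i) ^ κ i)]
  simp only [sub_self]
  split_ifs with hsupp
  · have hpos : ∀ i, 0 < κ i ↔ i ∈ S := fun i => by simp [← hsupp]
    rw [← prod_mul_prod_compl S]
    congr 1 <;> refine prod_congr rfl fun i hi => ?_
    · rw [zero_pow ((hpos i).mpr hi).ne', sub_zero]
    · have hzero : κ i = 0 := by simpa using mt (hpos i).mp (mem_compl.mp hi)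
      rw [hzero, pow_zero, pow_zero]
  · obtain ⟨i, hi⟩ : ∃ i, ¬(0 < κ i ↔ i ∈ S) := by simpa [Finset.ext_iff] using hsupp
    by_cases hiS : i ∈ S
    · have hzero : κ i = 0 := by simpa [hiS] using hi
      rw [prod_eq_zero hiS (by rw [hzero, pow_zero, pow_zero, sub_self]), zero_mul]
    · have hpos : 0 < κ i := Nat.pos_of_ne_zero (by simpa [hiS] using hi)
      rw [prod_eq_zero (mem_compl.mpr hiS) (zero_pow hpos.ne'), mul_zero]

/-- Theorem 1: for a function given by a finite Taylor-type expansion around a baseline `b`,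
the b-fANOVA effect `f_S^{(b)}(x) = Σ_{T ⊆ S} (-1)^{|S|-|T|} F(x_T, b_{−T})` equals the sum
of exactly those Taylor interaction terms whose degree vector has support `S`. -/
theorem bfanova_effect_eq_taylor_interactions (d : ℕ) (b : Fin d → ℝ)
    (A : Finset (Fin d → ℕ)) (a : (Fin d → ℕ) → ℝ) (F : (Fin d → ℝ) → ℝ)
    (hF : ∀ x : Fin d → ℝ, F x = ∑ κ ∈ A, a κ * ∏ i, (x i - b i) ^ κ i)
    (S : Finset (Fin d)) (x : Fin d → ℝ) :
    ∑ T ∈ S.powerset, (-1 : ℝ) ^ (S.card - T.card) *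
        F (fun i => if i ∈ T then x i else b i) =
      ∑ κ ∈ A.filter (fun κ => Finset.univ.filter (fun i => 0 < κ i) = S),
        a κ * ∏ i, (x i - b i) ^ κ i := by
  change bfanovaEffect F b S x = _
  rw [funext hF, bfanovaEffect_sum, sum_filter]
  simp only [bfanovaEffect_monomial, mul_ite, mul_zero]
end

section
/- Let D be a finite set, let X be a random variable, and for each L ⊆ D let f_L be a function such that f_L(X) is square-integrable. Define the global sensitivity game ν(T) := Var[Σ_{L ⊆ T} f_L(X)] for T ⊆ D, and let m be its Möbius transform, m(S) := Σ_{T ⊆ S} (-1)^{|S|-|T|} ν(T). If Cov(f_L(X), f_{L'}(X)) = 0 for all L ≠ L' (as holds for fANOVA effects of independent features), then for every S ⊆ D, m(S) = Var[f_S(X)]. (Theorem 3, independent case.) -/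
open Finset MeasureTheory ProbabilityTheory

lemma moebius_aux {α : Type*} [DecidableEq α] (v : Finset α → ℝ) (S : Finset α) :
    ∑ T ∈ S.powerset, (-1 : ℝ) ^ (S.card - T.card) * ∑ L ∈ T.powerset, v L = v S := by
  simp_rw [Finset.mul_sum]
  rw [Finset.sum_comm' (s := S.powerset) (t := fun T => T.powerset)
    (t' := S.powerset) (s' := fun L => (S.powerset).filter (fun T => L ⊆ T))
    (f := fun T L => (-1 : ℝ) ^ (S.card - T.card) * v L)]
  · have key : ∀ L ∈ S.powerset,
        ∑ T ∈ (S.powerset).filter (fun T => L ⊆ T), (-1 : ℝ) ^ (S.card - T.card) * v L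
          = (if L = S then 1 else 0) * v L := by
      intro L hL
      rw [mem_powerset] at hL
      have himg : (S.powerset).filter (fun T => L ⊆ T)
          = (S \ L).powerset.image (fun U => L ∪ U) := by
        ext T
        simp only [mem_filter, mem_powerset, mem_image]
        constructor
        · rintro ⟨h1, h2⟩
          exact ⟨T \ L, sdiff_subset_sdiff h1 le_rfl, by rw [union_sdiff_of_subset h2]⟩
        · rintro ⟨U, hU, rfl⟩
          exact ⟨union_subset hL (hU.trans sdiff_subset), subset_union_left⟩
      have hdisj : ∀ U ⊆ S \ L, Disjoint L U := fun U hU =>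
        (disjoint_of_subset_right hU sdiff_disjoint.symm)
      rw [himg, Finset.sum_image (by
        intro U hU U' hU' h
        rw [mem_coe, mem_powerset] at hU hU'
        have h1 := union_sdiff_cancel_left (hdisj U hU)
        have h2 := union_sdiff_cancel_left (hdisj U' hU')
        rw [← h1, ← h2, show L ∪ U = L ∪ U' from h])]
      have hcard : ∀ U ∈ (S \ L).powerset,
          S.card - (L ∪ U).card = (S \ L).card - U.card := by
        intro U hU
        rw [mem_powerset] at hU
        rw [card_union_of_disjoint (hdisj U hU), card_sdiff_of_subset hL]
        omega
      calc ∑ U ∈ (S \ L).powerset, (-1 : ℝ) ^ (S.card - (L ∪ U).card) * v L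
          = (∑ U ∈ (S \ L).powerset, (-1 : ℝ) ^ ((S \ L).card - U.card)) * v L := by
            rw [Finset.sum_mul]
            exact Finset.sum_congr rfl fun U hU => by rw [hcard U hU]
        _ = (if L = S then 1 else 0) * v L := by
            congr 1
            have : ∀ U ∈ (S \ L).powerset, (-1 : ℝ) ^ ((S \ L).card - U.card)
                = (-1 : ℝ) ^ (S \ L).card * (-1 : ℝ) ^ U.card := by
              intro U hU
              rw [mem_powerset] at hU
              have hle : U.card ≤ (S \ L).card := card_le_card hU
              rw [← pow_add, neg_one_pow_eq_pow_mod_two, neg_one_pow_eq_pow_mod_two (n := (S \ L).card + U.card)]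
              congr 1
              omega
            rw [Finset.sum_congr rfl this, ← Finset.mul_sum]
            have : (∑ U ∈ (S \ L).powerset, (-1 : ℝ) ^ U.card)
                = if S \ L = ∅ then 1 else 0 := by
              have := Finset.sum_powerset_neg_one_pow_card (x := S \ L)
              have h2 : ((∑ m ∈ (S \ L).powerset, (-1 : ℤ) ^ m.card : ℤ) : ℝ)
                  = ∑ U ∈ (S \ L).powerset, (-1 : ℝ) ^ U.card := by push_cast; ring_nf
              rw [← h2, this]
              split <;> norm_num
            rw [this]
            by_cases h : L = S
            · subst h; simp
            · have : S \ L ≠ ∅ := fun hc =>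
                h (subset_antisymm hL (Finset.sdiff_eq_empty_iff_subset.mp hc))
              simp [h, this]
    rw [Finset.sum_congr rfl key]
    simp
  · intro T L
    simp only [mem_powerset, mem_filter]
    constructor
    · rintro ⟨h1, h2⟩; exact ⟨⟨h1, h2⟩, h2.trans h1⟩
    · rintro ⟨⟨h1, h2⟩, _⟩; exact ⟨h1, h2⟩


lemma hve {Ω : Type*} [MeasurableSpace Ω] {μ : Measure Ω} {Y : Ω → ℝ} (hY : MemLp Y 2 μ) :
    variance Y μ = ∫ ω, ((Y - fun _ => ∫ x, Y x ∂μ) ^ (2:ℕ) : Ω → ℝ) ω ∂μ := by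
  rw [variance_eq_integral hY.aestronglyMeasurable.aemeasurable]
  rfl

lemma var_sum_of_uncorrelated {Ω : Type*} [MeasurableSpace Ω] (μ : Measure Ω)
    [IsProbabilityMeasure μ] {ι : Type*} [DecidableEq ι] (s : Finset ι) (g : ι → Ω → ℝ)
    (hg : ∀ i, MemLp (g i) 2 μ)
    (hcov : ∀ i j, i ≠ j →
      ∫ ω, (g i ω - ∫ ω', g i ω' ∂μ) * (g j ω - ∫ ω', g j ω' ∂μ) ∂μ = 0) :
    variance (fun ω => ∑ i ∈ s, g i ω) μ = ∑ i ∈ s, variance (g i) μ := by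
  set h : ι → Ω → ℝ := fun i ω => g i ω - ∫ ω', g i ω' ∂μ with hh_def
  have hh : ∀ i, MemLp (h i) 2 μ := fun i => (hg i).sub (memLp_const _)
  have hint : ∀ i j, Integrable (fun ω => h i ω * h j ω) μ := by
    intro i j
    have := ((hh j).smul (hh i) (p := 2) (q := 2) (r := 1) (hpqr := ⟨by rw [inv_one, ENNReal.inv_two_add_inv_two]⟩) : MemLp _ 1 μ)
    rw [memLp_one_iff_integrable] at this
    exact this
  have hsum : MemLp (fun ω => ∑ i ∈ s, g i ω) 2 μ := by
    convert memLp_finset_sum' s fun i _ => hg i using 1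
    ext ω; simp
  rw [hve hsum]
  have hmean : (∫ ω, ∑ i ∈ s, g i ω ∂μ) = ∑ i ∈ s, ∫ ω, g i ω ∂μ :=
    integral_finset_sum s fun i _ => (hg i).integrable one_le_two
  have : (((fun ω => ∑ i ∈ s, g i ω) - fun _ => ∫ ω, ∑ i ∈ s, g i ω ∂μ) ^ (2:ℕ))
      = fun ω => ∑ i ∈ s, ∑ j ∈ s, h i ω * h j ω := by
    ext ω
    simp only [Pi.pow_apply, Pi.sub_apply, hmean, ← Finset.sum_sub_distrib, sq]
    rw [Finset.sum_mul_sum]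
  rw [this,
    integral_finset_sum s (fun i _ => integrable_finset_sum s fun j _ => hint i j)]
  refine Finset.sum_congr rfl fun i _ => ?_
  rw [integral_finset_sum s fun j _ => hint i j]
  rw [Finset.sum_eq_single i (fun j _ hj => hcov i j (Ne.symm hj)) (fun hi' => by
    simp_all)]
  rw [hve (hg i)]
  congr 1
  ext ω
  simp [hh_def, sq]

/-- Theorem 3, independent case: if the components `f_L(X)` are square-integrable and pairwise
uncorrelated, the Möbius transform of the global sensitivity game
`ν(T) := Var[Σ_{L ⊆ T} f_L(X)]` is `m(S) = Var[f_S(X)]`. -/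
theorem moebius_sensitivity_game_of_uncorrelated {Ω E : Type*} [MeasurableSpace Ω]
    (μ : Measure Ω) [IsProbabilityMeasure μ]
    {α : Type*} [DecidableEq α] [Fintype α]
    (X : Ω → E) (f : Finset α → E → ℝ)
    (hsq : ∀ L : Finset α, MemLp (fun ω => f L (X ω)) 2 μ)
    (ν m : Finset α → ℝ)
    (hν : ∀ T : Finset α, ν T = variance (fun ω => ∑ L ∈ T.powerset, f L (X ω)) μ)
    (hm : ∀ S : Finset α, m S = ∑ T ∈ S.powerset, (-1 : ℝ) ^ (S.card - T.card) * ν T)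
    (hcov : ∀ L L' : Finset α, L ≠ L' →
      ∫ ω, (f L (X ω) - ∫ ω', f L (X ω') ∂μ) * (f L' (X ω) - ∫ ω', f L' (X ω') ∂μ) ∂μ = 0) :
    ∀ S : Finset α, m S = variance (fun ω => f S (X ω)) μ := by
  intro S
  have hν' : ∀ T : Finset α,
      ν T = ∑ L ∈ T.powerset, variance (fun ω => f L (X ω)) μ := by
    intro T
    rw [hν T, var_sum_of_uncorrelated μ T.powerset (fun L ω => f L (X ω))
      (fun L => hsq L) (fun L L' h => hcov L L' h)]
  rw [hm S]
  simp_rw [hν']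
  exact moebius_aux (fun L => variance (fun ω => f L (X ω)) μ) S
end

section
/- Let D be a finite set, let X be a random variable, and for each L ⊆ D let f_L be a function such that f_L(X) is square-integrable. Define the global sensitivity game ν(T) := Var[Σ_{L ⊆ T} f_L(X)] for T ⊆ D, and let m be its Möbius transform, m(S) := Σ_{T ⊆ S} (-1)^{|S|-|T|} ν(T). Then for every S ⊆ D, m(S) = Var[f_S(X)] + Σ_{(L,L') : L ∪ L' = S, L ≠ L'} Cov(f_L(X), f_{L'}(X)), where the sum ranges over ordered pairs of distinct subsets L, L' ⊆ S whose union is S. (Theorem 3, dependent case: for dependent features the covariances are exclusively distributed among the Möbius transform.) -/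
open Finset MeasureTheory ProbabilityTheory

private theorem alt_sum_aux {α : Type*} [DecidableEq α] (A S : Finset α) (hA : A ⊆ S) :
    ∑ T ∈ S.powerset.filter (fun T => A ⊆ T), (-1:ℝ)^(S.card - T.card)
      = if A = S then 1 else 0 := by
  have key : ∀ B : Finset α, ∑ U ∈ B.powerset, (-1:ℝ)^(B.card - U.card)
      = if B = ∅ then 1 else 0 := by
    intro B
    have h1 : ∀ U ∈ B.powerset, (-1:ℝ)^(B.card - U.card) = (-1)^B.card * (-1)^U.card := by
      intro U hU
      have hle : U.card ≤ B.card := card_le_card (mem_powerset.mp hU)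
      have hs : (-1:ℝ)^U.card * (-1)^U.card = 1 := by rw [← mul_pow]; norm_num
      have h2 : (-1:ℝ)^(B.card - U.card) * (-1)^U.card = (-1)^B.card := by
        rw [← pow_add]; congr 1; omega
      calc (-1:ℝ)^(B.card - U.card) = (-1)^(B.card - U.card) * ((-1)^U.card * (-1)^U.card) := by
            rw [hs, mul_one]
        _ = ((-1)^(B.card - U.card) * (-1)^U.card) * (-1)^U.card := by ring
        _ = (-1)^B.card * (-1)^U.card := by rw [h2]
    rw [Finset.sum_congr rfl h1, ← Finset.mul_sum]
    have hz : ∑ U ∈ B.powerset, (-1:ℝ)^U.card = if B = ∅ then 1 else 0 := by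
      have h := @Finset.sum_powerset_neg_one_pow_card α _ B
      calc ∑ U ∈ B.powerset, (-1:ℝ)^U.card
          = ((∑ U ∈ B.powerset, (-1:ℤ)^U.card : ℤ) : ℝ) := by push_cast; rfl
        _ = _ := by rw [h]; split_ifs <;> simp
    rw [hz]
    split_ifs with h
    · subst h; simp
    · simp
  rw [Finset.sum_nbij' (i := fun T => T \ A) (j := fun U => A ∪ U)]
  · rw [key (S \ A)]
    have : S \ A = ∅ ↔ A = S := by
      constructor
      · intro h; exact subset_antisymm hA (by simpa [Finset.sdiff_eq_empty_iff_subset] using h)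
      · intro h; simp [h]
    simp [this]
  · intro T hT
    simp only [mem_filter, mem_powerset] at hT
    exact mem_powerset.mpr (sdiff_subset_sdiff hT.1 Subset.rfl)
  · intro U hU
    simp only [mem_powerset] at hU
    simp only [mem_filter, mem_powerset]
    exact ⟨union_subset hA (hU.trans sdiff_subset), subset_union_left⟩
  · intro T hT
    simp only [mem_filter, mem_powerset] at hT
    exact union_sdiff_of_subset hT.2
  · intro U hU
    simp only [mem_powerset] at hU
    rw [union_sdiff_cancel_left]
    exact disjoint_sdiff.mono_right hU
  · intro T hT
    simp only [mem_filter, mem_powerset] at hT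
    congr 1
    rw [card_sdiff_of_subset hT.2, card_sdiff_of_subset hA]
    have := card_le_card hT.2
    have := card_le_card hT.1
    omega

private theorem var_sum_aux {Ω : Type*} [MeasurableSpace Ω] (μ : Measure Ω)
    [IsProbabilityMeasure μ]
    {ι : Type*} (s : Finset ι) (g : ι → Ω → ℝ) (hg : ∀ i, MemLp (g i) 2 μ) :
    variance (fun ω => ∑ i ∈ s, g i ω) μ
      = ∑ i ∈ s, ∑ j ∈ s, ∫ ω, (g i ω - ∫ ω', g i ω' ∂μ) * (g j ω - ∫ ω', g j ω' ∂μ) ∂μ := by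
  set c : ι → Ω → ℝ := fun i ω => g i ω - ∫ ω', g i ω' ∂μ with hc
  have hc2 : ∀ i, MemLp (c i) 2 μ := fun i => (hg i).sub (memLp_const _)
  have hmul : ∀ i j, Integrable (fun ω => c i ω * c j ω) μ := by
    intro i j
    exact memLp_one_iff_integrable.mp
      ((hc2 j).smul (hc2 i) (p := 2) (q := 2) (r := 1))
  have hsum2 : MemLp (fun ω => ∑ i ∈ s, g i ω) 2 μ := by
    convert memLp_finset_sum' s fun i _ => hg i using 1
    ext ω; simp
  rw [show variance (fun ω => ∑ i ∈ s, g i ω) μ = ∫ ω, (((fun ω => ∑ i ∈ s, g i ω) - fun _ => ∫ ω, ∑ i ∈ s, g i ω ∂μ) ^ 2 : Ω → ℝ) ω ∂μ from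
    variance_eq_integral hsum2.aestronglyMeasurable.aemeasurable]
  have hmean : (∫ ω, ∑ i ∈ s, g i ω ∂μ) = ∑ i ∈ s, ∫ ω', g i ω' ∂μ :=
    integral_finset_sum s fun i _ => (hg i).integrable one_le_two
  have hexp : ((fun ω => ∑ i ∈ s, g i ω) - fun _ => ∫ ω, ∑ i ∈ s, g i ω ∂μ) ^ 2
      = fun ω => ∑ i ∈ s, ∑ j ∈ s, c i ω * c j ω := by
    funext ω
    simp only [Pi.pow_apply, Pi.sub_apply, hmean, ← Finset.sum_sub_distrib, sq]
    rw [Finset.sum_mul_sum]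
  rw [hexp, integral_finset_sum s fun i _ => integrable_finset_sum s fun j _ => hmul i j]
  exact Finset.sum_congr rfl fun i _ => integral_finset_sum s fun j _ => hmul i j

/-- Theorem 3, dependent case: the Möbius transform of the global sensitivity game
`ν(T) := Var[Σ_{L ⊆ T} f_L(X)]` equals `Var[f_S(X)]` plus the sum of covariances
`Cov(f_L(X), f_{L'}(X))` over ordered pairs of distinct subsets with `L ∪ L' = S`. -/
theorem moebius_sensitivity_game_general {Ω E : Type*} [MeasurableSpace Ω]
    (μ : Measure Ω) [IsProbabilityMeasure μ]
    {α : Type*} [DecidableEq α] [Fintype α]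
    (X : Ω → E) (f : Finset α → E → ℝ)
    (hsq : ∀ L : Finset α, MemLp (fun ω => f L (X ω)) 2 μ)
    (ν m : Finset α → ℝ)
    (hν : ∀ T : Finset α, ν T = variance (fun ω => ∑ L ∈ T.powerset, f L (X ω)) μ)
    (hm : ∀ S : Finset α, m S = ∑ T ∈ S.powerset, (-1 : ℝ) ^ (S.card - T.card) * ν T) :
    ∀ S : Finset α, m S = variance (fun ω => f S (X ω)) μ +
      ∑ p ∈ (S.powerset ×ˢ S.powerset).filter (fun p => p.1 ∪ p.2 = S ∧ p.1 ≠ p.2),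
        ∫ ω, (f p.1 (X ω) - ∫ ω', f p.1 (X ω') ∂μ) *
          (f p.2 (X ω) - ∫ ω', f p.2 (X ω') ∂μ) ∂μ := by
  intro S
  set cov : Finset α → Finset α → ℝ := fun L L' =>
    ∫ ω, (f L (X ω) - ∫ ω', f L (X ω') ∂μ) * (f L' (X ω) - ∫ ω', f L' (X ω') ∂μ) ∂μ with hcov
  -- ν as a double sum of covariances, written over pairs
  have hνc : ∀ T : Finset α, ν T = ∑ p ∈ T.powerset ×ˢ T.powerset, cov p.1 p.2 := by
    intro T
    rw [hν, var_sum_aux μ T.powerset (fun L ω => f L (X ω)) hsq, ← Finset.sum_product']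
  -- rewrite inner sum as an indicator sum over pairs of subsets of S
  have hre : ∀ T ∈ S.powerset, ν T
      = ∑ p ∈ S.powerset ×ˢ S.powerset, if p.1 ∪ p.2 ⊆ T then cov p.1 p.2 else 0 := by
    intro T hT
    rw [← Finset.sum_filter, hνc T]
    congr 1
    ext p
    simp only [mem_filter, mem_product, mem_powerset, union_subset_iff]
    have hTS : T ⊆ S := mem_powerset.mp hT
    constructor
    · rintro ⟨h1, h2⟩
      exact ⟨⟨h1.trans hTS, h2.trans hTS⟩, h1, h2⟩
    · rintro ⟨_, h1, h2⟩
      exact ⟨h1, h2⟩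
  -- compute the Möbius transform
  have hmain : m S = ∑ p ∈ (S.powerset ×ˢ S.powerset).filter (fun p => p.1 ∪ p.2 = S),
      cov p.1 p.2 := by
    rw [hm, Finset.sum_congr rfl fun T hT => by rw [hre T hT]]
    simp only [Finset.mul_sum]
    rw [Finset.sum_comm]
    rw [Finset.sum_filter]
    refine Finset.sum_congr rfl fun p hp => ?_
    have hpS : p.1 ∪ p.2 ⊆ S := by
      simp only [mem_product, mem_powerset] at hp
      exact union_subset hp.1 hp.2
    calc ∑ T ∈ S.powerset, (-1:ℝ)^(S.card - T.card) * (if p.1 ∪ p.2 ⊆ T then cov p.1 p.2 else 0)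
        = ∑ T ∈ S.powerset, (if p.1 ∪ p.2 ⊆ T then (-1:ℝ)^(S.card - T.card) * cov p.1 p.2 else 0) := by
          refine Finset.sum_congr rfl fun T _ => ?_
          split_ifs <;> simp
      _ = ∑ T ∈ S.powerset.filter (fun T => p.1 ∪ p.2 ⊆ T),
            (-1:ℝ)^(S.card - T.card) * cov p.1 p.2 := by rw [Finset.sum_filter]
      _ = (∑ T ∈ S.powerset.filter (fun T => p.1 ∪ p.2 ⊆ T),
            (-1:ℝ)^(S.card - T.card)) * cov p.1 p.2 := by rw [Finset.sum_mul]
      _ = (if p.1 ∪ p.2 = S then 1 else 0) * cov p.1 p.2 := by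
            rw [alt_sum_aux _ _ hpS]
      _ = if p.1 ∪ p.2 = S then cov p.1 p.2 else 0 := by split_ifs <;> simp
  -- split off the diagonal pair (S, S)
  have hset : (S.powerset ×ˢ S.powerset).filter (fun p => p.1 ∪ p.2 = S)
      = insert (S, S) ((S.powerset ×ˢ S.powerset).filter (fun p => p.1 ∪ p.2 = S ∧ p.1 ≠ p.2)) := by
    ext p
    simp only [mem_insert, mem_filter, mem_product, mem_powerset]
    constructor
    · rintro ⟨⟨h1, h2⟩, h3⟩
      by_cases h : p.1 = p.2
      · left
        have h4 : p.1 = S := by rw [← h3, ← h, union_self]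
        have h5 : p.2 = S := h ▸ h4
        exact Prod.ext h4 h5
      · exact Or.inr ⟨⟨h1, h2⟩, h3, h⟩
    · rintro (h | ⟨⟨h1, h2⟩, h3, _⟩)
      · subst h; simp
      · exact ⟨⟨h1, h2⟩, h3⟩
  have hnot : (S, S) ∉ (S.powerset ×ˢ S.powerset).filter (fun p => p.1 ∪ p.2 = S ∧ p.1 ≠ p.2) := by
    simp
  have hvar : variance (fun ω => f S (X ω)) μ = cov S S := by
    rw [variance_eq_integral (hsq S).aestronglyMeasurable.aemeasurable]
    refine integral_congr_ae (Filter.Eventually.of_forall fun ω => ?_)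
    simp [sq]
  rw [hmain, hset, Finset.sum_insert hnot, hvar]
end

section
/- Let D be a finite set and ν : Finset D → ℝ a cooperative game with Möbius transform m(S) := Σ_{T ⊆ S} (-1)^{|S|-|T|} ν(T). Then for every S ⊆ D, the Co-Möbius transform (full interaction effect) satisfies Δ_S(D ∖ S) := Σ_{L ⊆ S} (-1)^{|S|-|L|} ν((D ∖ S) ∪ L) = Σ_{T : S ⊆ T ⊆ D} m(T). (Theorem 4, full interaction effect row of Table 2.) -/
/-!
Substituting the Möbius transform, the right-hand side becomes
`Σ_U ν(U) Σ_{S ∪ U ⊆ T ⊆ D} (-1)^{|T ∖ U|}`. The inner alternating sum over the interval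
`[S ∪ U, D]` vanishes unless `S ∪ U = D`, and the surviving sets `U ⊇ D ∖ S` are exactly
`(D ∖ S) ∪ L` with `L ⊆ S`, carrying the sign `(-1)^{|S ∖ L|}`.
-/

open Finset

namespace Finset

variable {α : Type*} [DecidableEq α]

lemma sum_Icc_eq_sum_powerset_sdiff {M : Type*} [AddCommMonoid M] {s t : Finset α} (h : s ⊆ t)
    (g : Finset α → M) : ∑ u ∈ Icc s t, g u = ∑ x ∈ (t \ s).powerset, g (s ∪ x) := by
  rw [Icc_eq_image_powerset h, sum_image]
  intro x hx y hy hxy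
  rw [← union_sdiff_cancel_left (disjoint_sdiff.mono_right (mem_powerset.1 hx)),
    ← union_sdiff_cancel_left (disjoint_sdiff.mono_right (mem_powerset.1 hy))]
  exact congrArg (· \ s) hxy

lemma sum_Icc_neg_one_pow_card_sdiff {R : Type*} [Ring R] (s t : Finset α) :
    ∑ u ∈ Icc s t, (-1 : R) ^ #(u \ s) = if s = t then 1 else 0 := by
  by_cases hst : s ⊆ t
  · calc ∑ u ∈ Icc s t, (-1 : R) ^ #(u \ s)
        = ∑ x ∈ (t \ s).powerset, (-1 : R) ^ #x := by
          rw [sum_Icc_eq_sum_powerset_sdiff hst]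
          refine sum_congr rfl fun x hx => ?_
          rw [union_sdiff_cancel_left (disjoint_sdiff.mono_right (mem_powerset.1 hx))]
      _ = ((∑ x ∈ (t \ s).powerset, (-1 : ℤ) ^ #x : ℤ) : R) := by push_cast; rfl
      _ = if s = t then 1 else 0 := by
          have hempty : t \ s = ∅ ↔ s = t := by
            rw [sdiff_eq_empty_iff_subset, subset_antisymm_iff, and_iff_right hst]
          rw [sum_powerset_neg_one_pow_card]
          simp only [hempty]
          split_ifs <;> simp
  · rw [Icc_eq_empty hst, sum_empty, if_neg (fun h => hst h.le)]

lemma sum_Icc_neg_one_pow_card_sdiff_of_subset {R : Type*} [Ring R] {u s : Finset α}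
    (hus : u ⊆ s) (t : Finset α) :
    ∑ v ∈ Icc s t, (-1 : R) ^ #(v \ u) = if s = t then (-1 : R) ^ #(t \ u) else 0 := by
  have hsplit : ∀ v ∈ Icc s t,
      (-1 : R) ^ #(v \ u) = (-1 : R) ^ #(s \ u) * (-1 : R) ^ #(v \ s) := by
    intro v hv
    have hsv := (mem_Icc.1 hv).1
    rw [← pow_add, card_sdiff_of_subset hsv, card_sdiff_of_subset hus,
      card_sdiff_of_subset (hus.trans hsv)]
    have := card_le_card hus
    have := card_le_card hsv
    congr 1
    omega
  rw [sum_congr rfl hsplit, ← mul_sum, sum_Icc_neg_one_pow_card_sdiff]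
  split_ifs with h
  · rw [h, mul_one]
  · rw [mul_zero]

lemma sum_Icc_sum_powerset_comm {M : Type*} [AddCommMonoid M] (f : Finset α → Finset α → M)
    (s b : Finset α) :
    ∑ t ∈ Icc s b, ∑ u ∈ t.powerset, f u t = ∑ u ∈ b.powerset, ∑ t ∈ Icc (s ∪ u) b, f u t :=
  sum_comm' fun t u => by
    simp only [mem_Icc, mem_powerset, union_subset_iff]
    exact ⟨fun ⟨⟨hst, htb⟩, hut⟩ => ⟨⟨⟨hst, hut⟩, htb⟩, hut.trans htb⟩,
      fun ⟨⟨⟨hst, hut⟩, htb⟩, _⟩ => ⟨⟨hst, htb⟩, hut⟩⟩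

end Finset

/-- Theorem 4, full interaction effect: the Co-Möbius transform
`Δ_S(D∖S) = Σ_{L ⊆ S} (-1)^{|S|-|L|} ν((D∖S) ∪ L)` equals `Σ_{T : S ⊆ T ⊆ D} m(T)`. -/
theorem comoebius_eq_sum_superset_moebius {α : Type*} [DecidableEq α] [Fintype α]
    (ν m : Finset α → ℝ)
    (hm : ∀ S : Finset α, m S = ∑ T ∈ S.powerset, (-1 : ℝ) ^ (S.card - T.card) * ν T)
    (S : Finset α) :
    ∑ L ∈ S.powerset, (-1 : ℝ) ^ (S.card - L.card) * ν ((Finset.univ \ S) ∪ L) =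
      ∑ T ∈ (Finset.univ : Finset α).powerset.filter (fun T => S ⊆ T), m T := by
  have hm' : ∀ T, m T = ∑ U ∈ T.powerset, (-1 : ℝ) ^ #(T \ U) * ν U := fun T => by
    rw [hm]
    exact sum_congr rfl fun U hU => by rw [card_sdiff_of_subset (mem_powerset.1 hU)]
  have hcover : ∀ U, S ∪ U = univ ↔ univ \ S ⊆ U := fun U => by
    rw [← univ_subset_iff]
    exact sdiff_le_iff.symm
  calc ∑ L ∈ S.powerset, (-1 : ℝ) ^ (#S - #L) * ν (univ \ S ∪ L)
      = ∑ U ∈ Icc (univ \ S) univ, (-1 : ℝ) ^ #(univ \ U) * ν U := by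
        rw [sum_Icc_eq_sum_powerset_sdiff (subset_univ _),
          Finset.sdiff_sdiff_eq_self (subset_univ S)]
        refine sum_congr rfl fun L hL => ?_
        have hcompl : univ \ (univ \ S ∪ L) = S \ L := by ext; simp
        rw [← card_sdiff_of_subset (mem_powerset.1 hL), hcompl]
    _ = ∑ U ∈ univ.powerset, if S ∪ U = univ then (-1 : ℝ) ^ #(univ \ U) * ν U else 0 := by
        rw [Icc_eq_filter_powerset, sum_filter]
        simp only [hcover]
    _ = ∑ U ∈ univ.powerset, ∑ T ∈ Icc (S ∪ U) univ, (-1 : ℝ) ^ #(T \ U) * ν U := by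
        refine sum_congr rfl fun U _ => ?_
        rw [← sum_mul, sum_Icc_neg_one_pow_card_sdiff_of_subset subset_union_right, ite_mul,
          zero_mul]
    _ = ∑ T ∈ Icc S univ, m T := by
        rw [← sum_Icc_sum_powerset_comm]
        simp only [hm']
    _ = ∑ T ∈ univ.powerset.filter (fun T => S ⊆ T), m T := by
        rw [Icc_eq_filter_powerset]
end

section
/- Let D be a finite set with |D| = d and ν : Finset D → ℝ a cooperative game with Möbius transform m(S) := Σ_{T ⊆ S} (-1)^{|S|-|T|} ν(T). Then for every i ∈ D, the Shapley value admits the Möbius representation: Σ_{T ⊆ D∖{i}} (1 / (d · C(d−1, |T|))) · (ν(T ∪ {i}) − ν(T)) = Σ_{S ⊆ D : i ∈ S} m(S) / |S|, where C(n,k) denotes the binomial coefficient. (Theorem 4, partial individual effect: the Shapley value distributes each Möbius weight of a coalition equally among its members.) -/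
open Finset

lemma key_sum (m : ℕ) : ∀ x : ℕ,
    ∑ j ∈ Finset.range (m + 1), (-1 : ℝ) ^ j * (m.choose j) / ((x : ℝ) + 1 + j) =
      ((m.factorial : ℝ) * x.factorial) / ((m + x + 1).factorial : ℝ) := by
  induction m with
  | zero =>
    intro x
    simp only [Finset.sum_range_one, pow_zero, Nat.choose_zero_right, Nat.cast_one,
      Nat.cast_zero, add_zero, one_mul, Nat.zero_add, Nat.factorial_one]
    rw [Nat.factorial_succ]
    have : ((x:ℝ)+1) ≠ 0 := by positivity
    have : ((x.factorial : ℕ):ℝ) ≠ 0 := by positivity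
    field_simp
    rw [Nat.factorial_zero]; push_cast; ring
  | succ m ih =>
    intro x
    rw [Finset.sum_range_succ']
    have h1 : ∀ j ∈ Finset.range (m+1),
        (-1 : ℝ) ^ (j+1) * ((m+1).choose (j+1)) / ((x : ℝ) + 1 + ((j:ℕ)+1 : ℕ)) =
        -((-1 : ℝ) ^ j * (m.choose j) / (((x:ℕ)+1 : ℕ) + 1 + j))
        - (-1 : ℝ) ^ j * (m.choose (j+1)) / ((x : ℝ) + 2 + j) := by
      intro j _
      rw [Nat.choose_succ_succ]
      push_cast
      have hne : (x : ℝ) + 2 + j ≠ 0 := by positivity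
      rw [show (x : ℝ) + 1 + (j+1) = (x : ℝ) + 2 + j from by ring]
      field_simp
      ring
    rw [Finset.sum_congr rfl h1, Finset.sum_sub_distrib]
    have h2 : ∑ j ∈ Finset.range (m+1),
        -((-1 : ℝ) ^ j * (m.choose j) / (((x:ℕ)+1 : ℕ) + 1 + j)) =
        -(((m.factorial : ℝ) * (x+1).factorial) / ((m + (x+1) + 1).factorial : ℝ)) := by
      rw [Finset.sum_neg_distrib, ih (x+1)]
    have h3 : ∑ j ∈ Finset.range (m+1),
        (-1 : ℝ) ^ j * (m.choose (j+1)) / ((x : ℝ) + 2 + j) =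
        1/((x:ℝ)+1) - ((m.factorial : ℝ) * x.factorial) / ((m + x + 1).factorial : ℝ) := by
      rw [Finset.sum_range_succ, Nat.choose_succ_self]
      simp only [Nat.cast_zero, mul_zero, zero_div, add_zero]
      have := ih x
      rw [Finset.sum_range_succ'] at this
      have h4 : ∀ j ∈ Finset.range m,
          (-1 : ℝ) ^ (j+1) * (m.choose (j+1)) / ((x : ℝ) + 1 + ((j:ℕ)+1 : ℕ)) =
          -((-1 : ℝ) ^ j * (m.choose (j+1)) / ((x : ℝ) + 2 + j)) := by
        intro j _
        push_cast
        rw [show (x : ℝ) + 1 + (j+1) = (x : ℝ) + 2 + j from by ring]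
        ring
      rw [Finset.sum_congr rfl h4, Finset.sum_neg_distrib] at this
      simp only [pow_zero, Nat.choose_zero_right, Nat.cast_one, Nat.cast_zero, add_zero,
        one_mul] at this
      linarith [this]
    rw [h2, h3]
    have hx1 : ((x:ℝ)+1) ≠ 0 := by positivity
    have fx1 : (((x+1).factorial : ℕ) : ℝ) = ((x:ℝ)+1) * x.factorial := by
      rw [Nat.factorial_succ]; push_cast; ring
    have fm1 : (((m+1).factorial : ℕ) : ℝ) = ((m:ℝ)+1) * m.factorial := by
      rw [Nat.factorial_succ]; push_cast; ring
    have fd : (((m+x+2).factorial : ℕ) : ℝ) = ((m:ℝ)+(x:ℝ)+2) * (m+x+1).factorial := by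
      rw [show m+x+2 = (m+x+1)+1 from rfl, Nat.factorial_succ]; push_cast; ring
    have e1 : (m + (x+1) + 1) = m + x + 2 := by omega
    have e2 : (m + 1 + x + 1) = m + x + 2 := by omega
    rw [e1, e2, fx1, fm1, fd]
    have hf : ((m+x+1).factorial : ℝ) ≠ 0 := by positivity
    have hd : ((m:ℝ)+(x:ℝ)+2) ≠ 0 := by positivity
    simp only [Nat.choose_zero_right, Nat.cast_one, Nat.cast_zero, add_zero, pow_zero, one_mul]
    field_simp
    ring

lemma sum_powerset_card {α : Type*} [DecidableEq α] (s : Finset α) (f : ℕ → ℝ) :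
    ∑ U ∈ s.powerset, f U.card = ∑ j ∈ Finset.range (s.card + 1), (s.card.choose j : ℝ) * f j := by
  rw [Finset.sum_powerset]
  refine Finset.sum_congr rfl (fun j _ => ?_)
  have h : ∀ U ∈ Finset.powersetCard j s, f U.card = f j := fun U hU => by
    rw [(Finset.mem_powersetCard.mp hU).2]
  rw [Finset.sum_congr rfl h, Finset.sum_const, nsmul_eq_mul, Finset.card_powersetCard]

lemma core {α : Type*} [DecidableEq α] [Fintype α] (B : Finset α) (hB : B.Nonempty) :
    ∑ S ∈ (Finset.univ : Finset α).powerset.filter (fun S => B ⊆ S),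
      (-1 : ℝ) ^ S.card / S.card =
    (-1 : ℝ) ^ B.card * ((Fintype.card α - B.card).factorial *
      (B.card - 1).factorial) / (Fintype.card α).factorial := by
  classical
  have hbpos : 0 < B.card := Finset.card_pos.mpr hB
  have hbij : ∑ S ∈ (Finset.univ : Finset α).powerset.filter (fun S => B ⊆ S),
      (-1 : ℝ) ^ S.card / S.card
      = ∑ U ∈ Bᶜ.powerset, (-1 : ℝ) ^ (U.card + B.card) / ((U.card + B.card : ℕ) : ℝ) := by
    refine Finset.sum_nbij' (fun S => S \ B) (fun U => U ∪ B) ?_ ?_ ?_ ?_ ?_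
    · intro S hS
      simp only [Finset.mem_filter, Finset.mem_powerset] at hS
      rw [Finset.mem_powerset]
      intro a ha
      simp only [Finset.mem_sdiff] at ha
      simp [ha.2]
    · intro U hU
      simp only [Finset.mem_powerset] at hU
      simp only [Finset.mem_filter, Finset.mem_powerset]
      exact ⟨Finset.subset_univ _, Finset.subset_union_right⟩
    · intro S hS
      simp only [Finset.mem_filter, Finset.mem_powerset] at hS
      exact Finset.sdiff_union_of_subset hS.2
    · intro U hU
      simp only [Finset.mem_powerset] at hU
      show (U ∪ B) \ B = U
      rw [Finset.union_sdiff_right]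
      exact Finset.sdiff_eq_self_of_disjoint (Finset.disjoint_left.mpr
        (fun a haU => by have := hU haU; simp only [Finset.mem_compl] at this; exact this))
    · intro S hS
      simp only [Finset.mem_filter, Finset.mem_powerset] at hS
      rw [Finset.card_sdiff_of_subset hS.2, Nat.sub_add_cancel (Finset.card_le_card hS.2)]
  rw [hbij, sum_powerset_card Bᶜ (fun c => (-1 : ℝ) ^ (c + B.card) / ((c + B.card : ℕ) : ℝ))]
  have hcompl : Bᶜ.card = Fintype.card α - B.card := Finset.card_compl B
  obtain ⟨x, hx⟩ : ∃ x, B.card = x + 1 :=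
    ⟨B.card - 1, (Nat.succ_pred_eq_of_pos hbpos).symm⟩
  have hstep : ∀ j ∈ Finset.range (Bᶜ.card + 1),
      ((Bᶜ.card.choose j : ℕ) : ℝ) * ((-1 : ℝ) ^ (j + B.card) / ((j + B.card : ℕ) : ℝ)) =
      (-1 : ℝ) ^ B.card * ((-1 : ℝ) ^ j * ((Bᶜ.card.choose j : ℕ) : ℝ) / ((x : ℝ) + 1 + j)) := by
    intro j _
    rw [pow_add]
    have : ((j + B.card : ℕ) : ℝ) = (x : ℝ) + 1 + j := by
      rw [hx]; push_cast; ring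
    rw [this]
    ring
  rw [Finset.sum_congr rfl hstep, ← Finset.mul_sum, key_sum Bᶜ.card x]
  have hd : B.card ≤ Fintype.card α := Finset.card_le_univ B
  have e1 : Bᶜ.card + x + 1 = Fintype.card α := by omega
  have e2 : B.card - 1 = x := by omega
  rw [e1, e2, hcompl]
  ring
/-- Theorem 4, partial individual effect: the Shapley value of player `i` admits the
Möbius representation `φ^{SV}(i) = Σ_{S ∋ i} m(S)/|S|`. -/
theorem shapley_value_eq_sum_moebius {α : Type*} [DecidableEq α] [Fintype α]
    (ν m : Finset α → ℝ)
    (hm : ∀ S : Finset α, m S = ∑ T ∈ S.powerset, (-1 : ℝ) ^ (S.card - T.card) * ν T)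
    (i : α) :
    ∑ T ∈ ((Finset.univ : Finset α) \ {i}).powerset,
        (1 / ((Fintype.card α : ℝ) * ((Fintype.card α - 1).choose T.card : ℝ))) *
          (ν (T ∪ {i}) - ν T) =
      ∑ S ∈ (Finset.univ : Finset α).powerset.filter (fun S => i ∈ S),
        m S / (S.card : ℝ) := by
  classical
  set d := Fintype.card α with hd
  have hd1 : 1 ≤ d := Fintype.card_pos_iff.mpr ⟨i⟩
  set w : ℕ → ℝ := fun t => ((t.factorial : ℝ) * ((d - 1 - t).factorial : ℝ)) /
    (d.factorial : ℝ) with hw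
  set c : Finset α → ℝ := fun T => if i ∈ T then w (T.card - 1) else -(w T.card) with hc
  -- weight lemma
  have hwlem : ∀ t : ℕ, t ≤ d - 1 →
      (1 : ℝ) / ((d : ℝ) * ((d - 1).choose t : ℝ)) = w t := by
    intro t ht
    have hch := Nat.choose_mul_factorial_mul_factorial ht
    have hdf : d.factorial = d * (d - 1).factorial := by
      conv_lhs => rw [show d = (d - 1) + 1 by omega]
      rw [Nat.factorial_succ, show d - 1 + 1 = d by omega]
    have hcpos : 0 < (d - 1).choose t := Nat.choose_pos ht
    rw [hw]
    rw [div_eq_div_iff (by positivity) (by positivity)]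
    rw [hdf]
    push_cast [← hch]
    ring
  -- the cardinality of univ \ {i}
  have hcard_diff : ((Finset.univ : Finset α) \ {i}).card = d - 1 := by
    rw [Finset.card_sdiff_of_subset (by simp), Finset.card_univ, Finset.card_singleton]
  -- the key per-coalition coefficient computation
  have hcoeff : ∀ T : Finset α, T ⊆ Finset.univ →
      ∑ S ∈ (Finset.univ : Finset α).powerset.filter (fun S => T ∪ {i} ⊆ S),
        (-1 : ℝ) ^ (S.card - T.card) * ν T / (S.card : ℝ) = c T * ν T := by
    intro T _
    set B := T ∪ {i} with hB
    have hBne : B.Nonempty := ⟨i, by simp [hB]⟩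
    have hTB : T ⊆ B := Finset.subset_union_left
    have hstep : ∀ S ∈ (Finset.univ : Finset α).powerset.filter (fun S => B ⊆ S),
        (-1 : ℝ) ^ (S.card - T.card) * ν T / (S.card : ℝ) =
        (((-1 : ℝ) ^ T.card * ν T)) * ((-1 : ℝ) ^ S.card / (S.card : ℝ)) := by
      intro S hS
      simp only [Finset.mem_filter, Finset.mem_powerset] at hS
      have hTS : T ⊆ S := hTB.trans hS.2
      have hle : T.card ≤ S.card := Finset.card_le_card hTS
      have hsq : (-1 : ℝ) ^ T.card * (-1 : ℝ) ^ T.card = 1 := by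
        rw [← pow_add]; exact Even.neg_one_pow ⟨T.card, rfl⟩
      have hsgn : (-1 : ℝ) ^ (S.card - T.card) = (-1 : ℝ) ^ S.card * (-1 : ℝ) ^ T.card := by
        have h1 : (-1 : ℝ) ^ S.card = (-1 : ℝ) ^ (S.card - T.card) * (-1 : ℝ) ^ T.card := by
          rw [← pow_add, Nat.sub_add_cancel hle]
        conv_rhs => rw [h1]
        rw [mul_assoc, hsq, mul_one]
      rw [hsgn]
      ring
    rw [Finset.sum_congr rfl hstep, ← Finset.mul_sum, core B hBne]
    by_cases hiT : i ∈ T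
    · have hBT : B = T := by rw [hB]; exact Finset.union_eq_left.mpr (by simp [hiT])
      have htpos : 1 ≤ T.card := Finset.card_pos.mpr ⟨i, hiT⟩
      have htd : T.card ≤ d := by rw [hd, ← Finset.card_univ]; exact Finset.card_le_univ T
      have hsq : (-1 : ℝ) ^ T.card * (-1 : ℝ) ^ T.card = 1 := by
        rw [← pow_add]; exact Even.neg_one_pow ⟨T.card, rfl⟩
      rw [hBT]
      simp only [hc, hiT, if_true, hw]
      rw [show d - 1 - (T.card - 1) = d - T.card from by omega]
      calc ((-1 : ℝ) ^ T.card * ν T) * ((-1 : ℝ) ^ T.card *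
            (((d - T.card).factorial : ℝ) * ((T.card - 1).factorial : ℝ)) / (d.factorial : ℝ))
          = ((-1 : ℝ) ^ T.card * (-1 : ℝ) ^ T.card) *
            ((((T.card - 1).factorial : ℝ) * ((d - T.card).factorial : ℝ)) / (d.factorial : ℝ)
              * ν T) := by ring
        _ = ((T.card - 1).factorial : ℝ) * ((d - T.card).factorial : ℝ) / (d.factorial : ℝ)
              * ν T := by rw [hsq, one_mul]
    · have hBcard : B.card = T.card + 1 := by
        rw [hB, Finset.card_union_of_disjoint (by simp [hiT]), Finset.card_singleton]
      have htd : T.card ≤ d - 1 := by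
        have : T.card < B.card := by omega
        have hBd : B.card ≤ d := by rw [hd, ← Finset.card_univ]; exact Finset.card_le_univ B
        omega
      have hsq : (-1 : ℝ) ^ T.card * (-1 : ℝ) ^ T.card = 1 := by
        rw [← pow_add]; exact Even.neg_one_pow ⟨T.card, rfl⟩
      simp only [hc, hiT, if_false, hw]
      rw [hBcard]
      have e1 : d - (T.card + 1) = d - 1 - T.card := by omega
      have e2 : T.card + 1 - 1 = T.card := by omega
      rw [e1, e2, pow_succ]
      calc ((-1 : ℝ) ^ T.card * ν T) * (((-1 : ℝ) ^ T.card * -1) *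
            (((d - 1 - T.card).factorial : ℝ) * ((T.card).factorial : ℝ)) / (d.factorial : ℝ))
          = ((-1 : ℝ) ^ T.card * (-1 : ℝ) ^ T.card) *
            (-(((T.card).factorial : ℝ) * ((d - 1 - T.card).factorial : ℝ) / (d.factorial : ℝ)
              * ν T)) := by ring
        _ = -(((T.card).factorial : ℝ) * ((d - 1 - T.card).factorial : ℝ) / (d.factorial : ℝ))
              * ν T := by rw [hsq, one_mul]; ring
  -- RHS transformation
  have hR : ∑ S ∈ (Finset.univ : Finset α).powerset.filter (fun S => i ∈ S),
      m S / (S.card : ℝ) = ∑ T ∈ (Finset.univ : Finset α).powerset, c T * ν T := by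
    have h1 : ∀ S ∈ (Finset.univ : Finset α).powerset.filter (fun S => i ∈ S),
        m S / (S.card : ℝ) = ∑ T ∈ (Finset.univ : Finset α).powerset,
          (if T ⊆ S then (-1 : ℝ) ^ (S.card - T.card) * ν T / (S.card : ℝ) else 0) := by
      intro S hS
      rw [hm S, Finset.sum_div]
      have hps : S.powerset = (Finset.univ : Finset α).powerset.filter (fun T => T ⊆ S) := by
        ext T
        simp [Finset.mem_powerset, Finset.subset_univ]
      rw [hps, Finset.sum_filter]
    rw [Finset.sum_congr rfl h1, Finset.sum_comm]
    refine Finset.sum_congr rfl (fun T hT => ?_)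
    rw [← Finset.sum_filter, Finset.filter_filter]
    have hfil : (Finset.univ : Finset α).powerset.filter (fun S => i ∈ S ∧ T ⊆ S) =
        (Finset.univ : Finset α).powerset.filter (fun S => T ∪ {i} ⊆ S) := by
      apply Finset.filter_congr
      intro S _
      simp only [Finset.union_subset_iff, Finset.singleton_subset_iff, eq_iff_iff]
      tauto
    rw [hfil]
    exact hcoeff T (Finset.mem_powerset.mp hT)
  -- LHS transformation
  have hL : ∑ T ∈ ((Finset.univ : Finset α) \ {i}).powerset,
      (1 / ((d : ℝ) * ((d - 1).choose T.card : ℝ))) * (ν (T ∪ {i}) - ν T) =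
      ∑ T ∈ (Finset.univ : Finset α).powerset, c T * ν T := by
    have h1 : ∀ T ∈ ((Finset.univ : Finset α) \ {i}).powerset,
        (1 / ((d : ℝ) * ((d - 1).choose T.card : ℝ))) * (ν (T ∪ {i}) - ν T) =
        w T.card * ν (T ∪ {i}) - w T.card * ν T := by
      intro T hT
      rw [Finset.mem_powerset] at hT
      have : T.card ≤ d - 1 := hcard_diff ▸ Finset.card_le_card hT
      rw [hwlem T.card this]
      ring
    rw [Finset.sum_congr rfl h1, Finset.sum_sub_distrib]
    have h2 : ∑ T ∈ ((Finset.univ : Finset α) \ {i}).powerset, w T.card * ν (T ∪ {i}) =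
        ∑ S ∈ (Finset.univ : Finset α).powerset.filter (fun S => i ∈ S),
          w (S.card - 1) * ν S := by
      refine Finset.sum_nbij' (fun T => T ∪ {i}) (fun S => S.erase i) ?_ ?_ ?_ ?_ ?_
      · intro T hT
        simp only [Finset.mem_powerset, Finset.mem_filter] at *
        exact ⟨Finset.subset_univ _, by simp⟩
      · intro S hS
        simp only [Finset.mem_filter, Finset.mem_powerset] at hS
        rw [Finset.mem_powerset]
        intro a ha
        rw [Finset.mem_erase] at ha
        simp [ha.1]
      · intro T hT
        rw [Finset.mem_powerset] at hT
        have hiT : i ∉ T := fun h => by simpa using hT h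
        show (T ∪ {i}).erase i = T
        rw [Finset.union_comm, ← Finset.insert_eq, Finset.erase_insert hiT]
      · intro S hS
        simp only [Finset.mem_filter] at hS
        show S.erase i ∪ {i} = S
        rw [Finset.union_comm, ← Finset.insert_eq, Finset.insert_erase hS.2]
      · intro T hT
        rw [Finset.mem_powerset] at hT
        have hiT : i ∉ T := fun h => by simpa using hT h
        have : (T ∪ {i}).card = T.card + 1 := by
          rw [Finset.card_union_of_disjoint (by simp [hiT]), Finset.card_singleton]
        rw [this]
        simp
    rw [h2]
    have hsplit : ∑ T ∈ (Finset.univ : Finset α).powerset, c T * ν T =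
        (∑ T ∈ (Finset.univ : Finset α).powerset.filter (fun T => i ∈ T), c T * ν T) +
        ∑ T ∈ (Finset.univ : Finset α).powerset.filter (fun T => ¬ i ∈ T), c T * ν T :=
      (Finset.sum_filter_add_sum_filter_not _ _ _).symm
    have hP' : ((Finset.univ : Finset α) \ {i}).powerset =
        (Finset.univ : Finset α).powerset.filter (fun T => ¬ i ∈ T) := by
      ext T
      simp only [Finset.mem_powerset, Finset.mem_filter, Finset.subset_sdiff,
        Finset.disjoint_singleton_right, Finset.subset_univ, true_and]
    rw [hsplit, hP']
    have h3 : ∀ T ∈ (Finset.univ : Finset α).powerset.filter (fun T => i ∈ T),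
        c T * ν T = w (T.card - 1) * ν T := by
      intro T hT
      simp only [Finset.mem_filter] at hT
      rw [hc]
      simp [hT.2]
    have h4 : ∀ T ∈ (Finset.univ : Finset α).powerset.filter (fun T => ¬ i ∈ T),
        c T * ν T = -(w T.card * ν T) := by
      intro T hT
      simp only [Finset.mem_filter] at hT
      rw [hc]
      simp [hT.2]
    rw [Finset.sum_congr rfl h3, Finset.sum_congr rfl h4, Finset.sum_neg_distrib]
    ring
  rw [hL, hR]
end

section
/- Let D be a finite set with |D| = d and ν : Finset D → ℝ a cooperative game with Möbius transform m(S) := Σ_{T ⊆ S} (-1)^{|S|-|T|} ν(T). For a nonempty S ⊆ D with |S| = s, define the Shapley interaction index φ^{II}(S) := Σ_{T ⊆ D∖S} p_{|T|}^{s} · Δ_S(T), where p_t^s := 1 / ((d − s + 1) · C(d−s, t)) and Δ_S(T) := Σ_{L ⊆ S} (-1)^{s−|L|} ν(T ∪ L). Then φ^{II}(S) = Σ_{T : S ⊆ T ⊆ D} m(T) / (|T ∖ S| + 1). (Theorem 4, partial interaction effect with Shapley weights w_ℓ^s = 1/(ℓ+1).) -/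
open Finset

-- alternating sum over interval [C, A], exponent |B|-|C|
lemma alt_interval1 {α : Type*} [DecidableEq α] (C A : Finset α) (hCA : C ⊆ A) :
    ∑ B ∈ A.powerset.filter (fun B => C ⊆ B), (-1 : ℝ) ^ (B.card - C.card)
      = if A = C then 1 else 0 := by
  have h1 : ∑ B ∈ A.powerset.filter (fun B => C ⊆ B), (-1 : ℝ) ^ (B.card - C.card)
      = ∑ L ∈ (A \ C).powerset, (-1 : ℝ) ^ L.card := by
    refine Finset.sum_nbij' (fun B => B \ C) (fun L => L ∪ C) ?_ ?_ ?_ ?_ ?_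
    · intro B hB
      simp only [mem_filter, mem_powerset] at hB
      exact mem_powerset.mpr (sdiff_subset_sdiff hB.1 Subset.rfl)
    · intro L hL
      simp only [mem_powerset] at hL
      have hdisj : Disjoint L C := (subset_sdiff.mp hL).2
      simp only [mem_filter, mem_powerset]
      exact ⟨union_subset ((subset_sdiff.mp hL).1) hCA, subset_union_right⟩
    · intro B hB
      simp only [mem_filter, mem_powerset] at hB
      exact sdiff_union_of_subset hB.2
    · intro L hL
      simp only [mem_powerset] at hL
      exact union_sdiff_cancel_right (subset_sdiff.mp hL).2
    · intro B hB
      simp only [mem_filter, mem_powerset] at hB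
      rw [card_sdiff_of_subset hB.2]
  rw [h1]
  have h2 := Finset.sum_powerset_neg_one_pow_card (x := A \ C)
  have h3 : ((∑ B ∈ (A \ C).powerset, (-1 : ℤ) ^ B.card : ℤ) : ℝ)
      = ∑ B ∈ (A \ C).powerset, (-1 : ℝ) ^ B.card := by push_cast; rfl
  rw [← h3, h2]
  have : A \ C = ∅ ↔ A = C := by
    rw [sdiff_eq_empty_iff_subset]
    exact ⟨fun h => Subset.antisymm h hCA, fun h => h.le⟩
  split_ifs with h4 h5 h5 <;> simp_all

-- alternating sum over interval [C, A], exponent |A|-|B|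
lemma alt_interval2 {α : Type*} [DecidableEq α] (C A : Finset α) (hCA : C ⊆ A) :
    ∑ B ∈ A.powerset.filter (fun B => C ⊆ B), (-1 : ℝ) ^ (A.card - B.card)
      = if A = C then 1 else 0 := by
  have h1 : ∑ B ∈ A.powerset.filter (fun B => C ⊆ B), (-1 : ℝ) ^ (A.card - B.card)
      = ∑ L ∈ (A \ C).powerset, (-1 : ℝ) ^ L.card := by
    refine Finset.sum_nbij' (fun B => A \ B) (fun L => A \ L) ?_ ?_ ?_ ?_ ?_
    · intro B hB
      simp only [mem_filter, mem_powerset] at hB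
      exact mem_powerset.mpr (sdiff_subset_sdiff Subset.rfl hB.2)
    · intro L hL
      simp only [mem_powerset] at hL
      simp only [mem_filter, mem_powerset]
      refine ⟨sdiff_subset, subset_sdiff.mpr ⟨hCA, ?_⟩⟩
      exact (disjoint_sdiff.mono_right hL).symm.symm
    · intro B hB
      simp only [mem_filter, mem_powerset] at hB
      exact Finset.sdiff_sdiff_eq_self hB.1
    · intro L hL
      simp only [mem_powerset] at hL
      exact Finset.sdiff_sdiff_eq_self (hL.trans sdiff_subset)
    · intro B hB
      simp only [mem_filter, mem_powerset] at hB
      rw [card_sdiff_of_subset hB.1]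
  rw [h1]
  have h2 := Finset.sum_powerset_neg_one_pow_card (x := A \ C)
  have h3 : ((∑ B ∈ (A \ C).powerset, (-1 : ℤ) ^ B.card : ℤ) : ℝ)
      = ∑ B ∈ (A \ C).powerset, (-1 : ℝ) ^ B.card := by push_cast; rfl
  rw [← h3, h2]
  have : A \ C = ∅ ↔ A = C := by
    rw [sdiff_eq_empty_iff_subset]
    exact ⟨fun h => Subset.antisymm h hCA, fun h => h.le⟩
  split_ifs with h4 h5 h5 <;> simp_all

-- Moebius inversion
lemma moebius_inv {α : Type*} [DecidableEq α] (ν m : Finset α → ℝ)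
    (hm : ∀ S : Finset α, m S = ∑ T ∈ S.powerset, (-1 : ℝ) ^ (S.card - T.card) * ν T)
    (A : Finset α) : ∑ B ∈ A.powerset, m B = ν A := by
  calc ∑ B ∈ A.powerset, m B
      = ∑ B ∈ A.powerset, ∑ C ∈ A.powerset,
          (if C ⊆ B then (-1 : ℝ) ^ (B.card - C.card) * ν C else 0) := by
        refine sum_congr rfl fun B hB => ?_
        rw [hm B, ← Finset.sum_filter]
        apply Finset.sum_congr _ (fun _ _ => rfl)
        ext C
        simp only [mem_filter, mem_powerset, mem_powerset]
        exact ⟨fun h => ⟨h.trans (mem_powerset.mp hB), h⟩, fun h => h.2⟩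
    _ = ∑ C ∈ A.powerset, ν C *
          ∑ B ∈ A.powerset.filter (fun B => C ⊆ B), (-1 : ℝ) ^ (B.card - C.card) := by
        rw [Finset.sum_comm]
        refine sum_congr rfl fun C _ => ?_
        rw [Finset.sum_filter, Finset.mul_sum]
        refine sum_congr rfl fun B _ => ?_
        split_ifs <;> ring
    _ = ν A := by
        rw [Finset.sum_eq_single_of_mem A (mem_powerset_self A)]
        · rw [alt_interval1 A A Subset.rfl, if_pos rfl, mul_one]
        · intro C hC hne
          rw [alt_interval1 C A (mem_powerset.mp hC), if_neg (fun h => hne h.symm), mul_zero]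

lemma union_subset_iff_sdiff {α : Type*} [DecidableEq α] (B T L : Finset α) :
    B ⊆ T ∪ L ↔ B \ T ⊆ L := by
  constructor
  · intro h x hx
    rcases Finset.mem_sdiff.mp hx with ⟨hxB, hxT⟩
    rcases Finset.mem_union.mp (h hxB) with h1 | h2
    · exact absurd h1 hxT
    · exact h2
  · intro h x hx
    by_cases hxT : x ∈ T
    · exact Finset.mem_union.mpr (Or.inl hxT)
    · exact Finset.mem_union.mpr (Or.inr (h (Finset.mem_sdiff.mpr ⟨hx, hxT⟩)))

lemma derivative_eq {α : Type*} [DecidableEq α] (ν m : Finset α → ℝ)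
    (hm : ∀ S : Finset α, m S = ∑ T ∈ S.powerset, (-1 : ℝ) ^ (S.card - T.card) * ν T)
    (S T : Finset α) (hd : Disjoint T S) :
    ∑ L ∈ S.powerset, (-1 : ℝ) ^ (S.card - L.card) * ν (T ∪ L)
      = ∑ L ∈ T.powerset, m (S ∪ L) := by
  have step1 : ∑ L ∈ S.powerset, (-1 : ℝ) ^ (S.card - L.card) * ν (T ∪ L)
      = ∑ L ∈ S.powerset, ∑ B ∈ (T ∪ S).powerset,
          (if B ⊆ T ∪ L then (-1 : ℝ) ^ (S.card - L.card) * m B else 0) := by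
    refine sum_congr rfl fun L hL => ?_
    have hpow : (T ∪ L).powerset = (T ∪ S).powerset.filter (fun B => B ⊆ T ∪ L) := by
      ext B
      simp only [mem_filter, mem_powerset]
      constructor
      · intro h
        exact ⟨h.trans (union_subset_union Subset.rfl (mem_powerset.mp hL)), h⟩
      · exact fun h => h.2
    rw [← moebius_inv ν m hm (T ∪ L), hpow, Finset.sum_filter, Finset.mul_sum]
    refine sum_congr rfl fun B _ => ?_
    split_ifs <;> ring
  rw [step1, Finset.sum_comm]
  have step2 : ∀ B ∈ (T ∪ S).powerset,
      (∑ L ∈ S.powerset, if B ⊆ T ∪ L then (-1 : ℝ) ^ (S.card - L.card) * m B else 0)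
        = (if S = B \ T then m B else 0) := by
    intro B hB
    have hBT : B \ T ⊆ S := (union_subset_iff_sdiff B T S).mp (mem_powerset.mp hB)
    calc (∑ L ∈ S.powerset, if B ⊆ T ∪ L then (-1 : ℝ) ^ (S.card - L.card) * m B else 0)
        = (∑ L ∈ S.powerset.filter (fun L => B \ T ⊆ L), (-1 : ℝ) ^ (S.card - L.card)) * m B := by
          rw [Finset.sum_filter, Finset.sum_mul]
          refine sum_congr rfl fun L _ => ?_
          by_cases h : B \ T ⊆ L
          · rw [if_pos h, if_pos ((union_subset_iff_sdiff B T L).mpr h)]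
          · rw [if_neg h, if_neg (fun hc => h ((union_subset_iff_sdiff B T L).mp hc)), zero_mul]
      _ = _ := by
          rw [alt_interval2 (B \ T) S hBT]
          split_ifs <;> ring
  rw [Finset.sum_congr rfl step2, ← Finset.sum_filter]
  refine Finset.sum_nbij' (fun B => B \ S) (fun L => S ∪ L) ?_ ?_ ?_ ?_ ?_
  · intro B hB
    simp only [mem_filter, mem_powerset] at hB
    rw [mem_powerset]
    rw [← union_subset_iff_sdiff]
    exact hB.1.trans (union_comm T S ▸ Subset.rfl)
  · intro L hL
    rw [mem_powerset] at hL
    simp only [mem_filter, mem_powerset]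
    constructor
    · exact union_subset (subset_union_right) (hL.trans subset_union_left)
    · rw [union_sdiff_distrib, sdiff_eq_empty_iff_subset.mpr hL,
        (Finset.sdiff_eq_self_iff_disjoint).mpr hd.symm, union_empty]
  · intro B hB
    simp only [mem_filter, mem_powerset] at hB
    have hSB : S ⊆ B := hB.2 ▸ sdiff_subset
    exact Finset.union_sdiff_of_subset hSB
  · intro L hL
    rw [mem_powerset] at hL
    exact Finset.union_sdiff_cancel_left (hd.symm.mono_right hL)
  · intro B hB
    simp only [mem_filter, mem_powerset] at hB
    have hSB : S ⊆ B := hB.2 ▸ sdiff_subset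
    rw [Finset.union_sdiff_of_subset hSB]

lemma num_id (n l : ℕ) (h : l ≤ n) :
    ∑ j ∈ range (n - l + 1), ((n - l).choose j : ℝ) *
        (1 / (((n : ℝ) + 1) * (n.choose (j + l) : ℝ))) = 1 / ((l : ℝ) + 1) := by
  have hsum : ∑ j ∈ range (n - l + 1), ((j + l).choose l : ℕ) = (n + 1).choose (l + 1) := by
    rw [← Nat.sum_Icc_choose n l]
    refine Finset.sum_nbij' (fun j => j + l) (fun m => m - l) ?_ ?_ ?_ ?_ ?_
    · simp only [mem_range, mem_Icc]; intros; omega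
    · simp only [mem_range, mem_Icc]; intros; omega
    · simp only [mem_range]; intros; omega
    · simp only [mem_Icc]; intros; omega
    · intros; rfl
  have step : ∀ j ∈ range (n - l + 1),
      ((n - l).choose j : ℝ) * (1 / (((n : ℝ) + 1) * (n.choose (j + l) : ℝ)))
        = ((j + l).choose l : ℝ) * (1 / (((n : ℝ) + 1) * (n.choose l : ℝ))) := by
    intro j hj
    rw [mem_range] at hj
    have hjl : j + l ≤ n := by omega
    have key : n.choose (j + l) * ((j + l).choose l) = n.choose l * ((n - l).choose j) := by
      have := Nat.choose_mul (n := n) (Nat.le_add_left l j)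
      simpa using this
    have h1 : (0 : ℝ) < (n.choose (j + l) : ℝ) := by
      exact_mod_cast Nat.choose_pos hjl
    have h2 : (0 : ℝ) < (n.choose l : ℝ) := by exact_mod_cast Nat.choose_pos h
    have h3 : (0 : ℝ) < (n : ℝ) + 1 := by positivity
    have keyR : (n.choose (j + l) : ℝ) * ((j + l).choose l : ℝ)
        = (n.choose l : ℝ) * ((n - l).choose j : ℝ) := by exact_mod_cast key
    field_simp
    linear_combination -keyR
  rw [Finset.sum_congr rfl step, ← Finset.sum_mul]
  have hcast : (∑ j ∈ range (n - l + 1), ((j + l).choose l : ℝ)) = ((n + 1).choose (l + 1) : ℝ) := by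
    exact_mod_cast congrArg (Nat.cast : ℕ → ℝ) hsum
  rw [hcast]
  have key2 : (n + 1) * n.choose l = (n + 1).choose (l + 1) * (l + 1) :=
    Nat.add_one_mul_choose_eq n l
  have h2 : (0 : ℝ) < (n.choose l : ℝ) := by exact_mod_cast Nat.choose_pos h
  have h4 : (0 : ℝ) < ((n + 1).choose (l + 1) : ℝ) := by
    exact_mod_cast Nat.choose_pos (by omega : l + 1 ≤ n + 1)
  have key2R : ((n : ℝ) + 1) * (n.choose l : ℝ) = ((n + 1).choose (l + 1) : ℝ) * ((l : ℝ) + 1) := by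
    exact_mod_cast key2
  field_simp
  linear_combination -key2R

lemma weight_sum {α : Type*} [DecidableEq α] (X L : Finset α) (hL : L ⊆ X) :
    ∑ T ∈ X.powerset.filter (fun T => L ⊆ T),
        (1 / (((X.card : ℝ) + 1) * (X.card.choose T.card : ℝ)))
      = 1 / ((L.card : ℝ) + 1) := by
  have h1 : ∑ T ∈ X.powerset.filter (fun T => L ⊆ T),
        (1 / (((X.card : ℝ) + 1) * (X.card.choose T.card : ℝ)))
      = ∑ U ∈ (X \ L).powerset,
        (1 / (((X.card : ℝ) + 1) * (X.card.choose (U.card + L.card) : ℝ))) := by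
    refine Finset.sum_nbij' (fun T => T \ L) (fun U => U ∪ L) ?_ ?_ ?_ ?_ ?_
    · intro T hT
      simp only [mem_filter, mem_powerset] at hT
      exact mem_powerset.mpr (sdiff_subset_sdiff hT.1 Subset.rfl)
    · intro U hU
      simp only [mem_powerset] at hU
      simp only [mem_filter, mem_powerset]
      exact ⟨union_subset ((subset_sdiff.mp hU).1) hL, subset_union_right⟩
    · intro T hT
      simp only [mem_filter, mem_powerset] at hT
      exact sdiff_union_of_subset hT.2
    · intro U hU
      simp only [mem_powerset] at hU
      exact union_sdiff_cancel_right (subset_sdiff.mp hU).2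
    · intro T hT
      simp only [mem_filter, mem_powerset] at hT
      rw [Finset.card_sdiff_add_card_eq_card hT.2]
  rw [h1]
  rw [Finset.sum_powerset_apply_card
    (f := fun c => 1 / (((X.card : ℝ) + 1) * (X.card.choose (c + L.card) : ℝ)))]
  rw [card_sdiff_of_subset hL]
  have := num_id X.card L.card (card_le_card hL)
  simpa only [nsmul_eq_mul] using this

/-- Theorem 4, partial interaction effect: the Shapley interaction index
`φ^{II}(S) = Σ_{T ⊆ D∖S} p_{|T|}^{s} Δ_S(T)` with `p_t^s = 1/((d−s+1)·C(d−s,t))` satisfies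
`φ^{II}(S) = Σ_{T : S ⊆ T ⊆ D} m(T)/(|T∖S|+1)`. -/
theorem shapley_interaction_index_eq_sum_moebius {α : Type*} [DecidableEq α] [Fintype α]
    (ν m : Finset α → ℝ)
    (hm : ∀ S : Finset α, m S = ∑ T ∈ S.powerset, (-1 : ℝ) ^ (S.card - T.card) * ν T)
    (S : Finset α) (hS : S.Nonempty) :
    ∑ T ∈ ((Finset.univ : Finset α) \ S).powerset,
        (1 / (((Fintype.card α - S.card + 1 : ℕ) : ℝ) *
            (((Fintype.card α - S.card).choose T.card : ℕ) : ℝ))) *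
          ∑ L ∈ S.powerset, (-1 : ℝ) ^ (S.card - L.card) * ν (T ∪ L) =
      ∑ T ∈ (Finset.univ : Finset α).powerset.filter (fun T => S ⊆ T),
        m T / (((T \ S).card + 1 : ℕ) : ℝ) := by
  classical
  set X := (Finset.univ : Finset α) \ S with hXdef
  have hXcard : Fintype.card α - S.card = X.card := by
    rw [hXdef, card_sdiff_of_subset (subset_univ S), card_univ]
  calc ∑ T ∈ X.powerset,
        (1 / (((Fintype.card α - S.card + 1 : ℕ) : ℝ) *
            (((Fintype.card α - S.card).choose T.card : ℕ) : ℝ))) *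
          ∑ L ∈ S.powerset, (-1 : ℝ) ^ (S.card - L.card) * ν (T ∪ L)
      = ∑ T ∈ X.powerset, (1 / (((X.card : ℝ) + 1) * (X.card.choose T.card : ℝ))) *
          ∑ L ∈ T.powerset, m (S ∪ L) := by
        refine sum_congr rfl fun T hT => ?_
        rw [derivative_eq ν m hm S T ((subset_sdiff.mp (mem_powerset.mp hT)).2), hXcard]
        push_cast
        ring
    _ = ∑ T ∈ X.powerset, ∑ L ∈ X.powerset,
          (if L ⊆ T then (1 / (((X.card : ℝ) + 1) * (X.card.choose T.card : ℝ))) * m (S ∪ L)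
            else 0) := by
        refine sum_congr rfl fun T hT => ?_
        have hpow : T.powerset = X.powerset.filter (fun L => L ⊆ T) := by
          ext L
          simp only [mem_filter, mem_powerset]
          exact ⟨fun h => ⟨h.trans (mem_powerset.mp hT), h⟩, fun h => h.2⟩
        rw [Finset.mul_sum, hpow, Finset.sum_filter]
    _ = ∑ L ∈ X.powerset, m (S ∪ L) * (1 / ((L.card : ℝ) + 1)) := by
        rw [Finset.sum_comm]
        refine sum_congr rfl fun L hL => ?_
        calc ∑ T ∈ X.powerset,
              (if L ⊆ T then (1 / (((X.card : ℝ) + 1) * (X.card.choose T.card : ℝ))) * m (S ∪ L)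
                else 0)
            = (∑ T ∈ X.powerset.filter (fun T => L ⊆ T),
                (1 / (((X.card : ℝ) + 1) * (X.card.choose T.card : ℝ)))) * m (S ∪ L) := by
              rw [Finset.sum_filter, Finset.sum_mul]
              refine sum_congr rfl fun T _ => ?_
              split_ifs <;> ring
          _ = m (S ∪ L) * (1 / ((L.card : ℝ) + 1)) := by
              rw [weight_sum X L (mem_powerset.mp hL)]
              ring
    _ = ∑ T ∈ (Finset.univ : Finset α).powerset.filter (fun T => S ⊆ T),
          m T / (((T \ S).card + 1 : ℕ) : ℝ) := by
        refine Finset.sum_nbij' (fun L => S ∪ L) (fun T => T \ S) ?_ ?_ ?_ ?_ ?_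
        · intro L _
          simp only [mem_filter, mem_powerset]
          exact ⟨subset_univ _, subset_union_left⟩
        · intro T hT
          rw [mem_powerset, hXdef]
          exact sdiff_subset_sdiff (subset_univ T) Subset.rfl
        · intro L hL
          rw [mem_powerset, hXdef] at hL
          exact Finset.union_sdiff_cancel_left ((subset_sdiff.mp hL).2).symm
        · intro T hT
          simp only [mem_filter, mem_powerset] at hT
          exact Finset.union_sdiff_of_subset hT.2
        · intro L hL
          rw [mem_powerset, hXdef] at hL
          have hcard : ((S ∪ L) \ S).card = L.card := by
            rw [Finset.union_sdiff_cancel_left ((subset_sdiff.mp hL).2).symm]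
          rw [hcard]
          push_cast
          ring
end

section
/- Let d ∈ ℕ, b, x ∈ ℝ^d, and let F : ℝ^d → ℝ be given by F(y) = Σ_{κ ∈ A} a_κ · Π_{j=1}^d (y_j − b_j)^{κ_j} for a finite set A ⊆ ℕ^d and coefficients a_κ ∈ ℝ. Then for every coordinate i, the Integrated Gradients attribution satisfies (x_i − b_i) · ∫_0^1 ∂_i F(b + α·(x − b)) dα = Σ_{κ ∈ A : κ_i > 0} (κ_i / |κ|) · a_κ · Π_{j=1}^d (x_j − b_j)^{κ_j}, where ∂_i F denotes the partial derivative of F in the i-th coordinate and |κ| := Σ_{j=1}^d κ_j. (Integrated Gradients summarizes each Taylor interaction term with weight κ_i/|κ|.) -/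
open Finset

/-- Integrated Gradients on a Taylor-type expansion: for
`F(y) = Σ_{κ ∈ A} a_κ Π_j (y_j − b_j)^{κ_j}` and any coordinate `i`,
`(x_i − b_i) ∫_0^1 ∂_i F(b + α(x−b)) dα = Σ_{κ : κ_i > 0} (κ_i/|κ|) a_κ Π_j (x_j − b_j)^{κ_j}`. -/
theorem integrated_gradients_eq_weighted_taylor (d : ℕ) (b x : Fin d → ℝ)
    (A : Finset (Fin d → ℕ)) (a : (Fin d → ℕ) → ℝ) (F : (Fin d → ℝ) → ℝ)
    (hF : ∀ y : Fin d → ℝ, F y = ∑ κ ∈ A, a κ * ∏ j, (y j - b j) ^ κ j)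
    (i : Fin d) :
    (x i - b i) * ∫ α in (0:ℝ)..1, fderiv ℝ F (b + α • (x - b)) (Pi.single i 1) =
      ∑ κ ∈ A.filter (fun κ => 0 < κ i),
        ((κ i : ℝ) / (∑ j, (κ j : ℝ))) * a κ * ∏ j, (x j - b j) ^ κ j := by
  classical
  have hFfun : F = fun y => ∑ κ ∈ A, a κ * ∏ j, (y j - b j) ^ κ j := funext hF
  subst hFfun
  -- derivative of a monomial
  have hmono : ∀ (κ : Fin d → ℕ) (y : Fin d → ℝ),
      HasFDerivAt (fun y : Fin d → ℝ => ∏ j, (y j - b j) ^ κ j)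
        (∑ j, (∏ k ∈ univ.erase j, (y k - b k) ^ κ k) •
          (((κ j : ℝ) * (y j - b j) ^ (κ j - 1)) •
            (ContinuousLinearMap.proj j : ((Fin d) → ℝ) →L[ℝ] ℝ))) y := by
    intro κ y
    refine HasFDerivAt.finset_prod (fun j _ => ?_)
    have hin : HasFDerivAt (fun y : Fin d → ℝ => y j - b j)
        (ContinuousLinearMap.proj j : ((Fin d) → ℝ) →L[ℝ] ℝ) y :=
      ((ContinuousLinearMap.proj j : ((Fin d) → ℝ) →L[ℝ] ℝ).hasFDerivAt).sub_const (b j)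
    exact (hasDerivAt_pow (κ j) (y j - b j)).comp_hasFDerivAt y hin
  have hF' : ∀ y : Fin d → ℝ,
      HasFDerivAt (fun y : Fin d → ℝ => ∑ κ ∈ A, a κ * ∏ j, (y j - b j) ^ κ j)
        (∑ κ ∈ A, a κ • (∑ j, (∏ k ∈ univ.erase j, (y k - b k) ^ κ k) •
          (((κ j : ℝ) * (y j - b j) ^ (κ j - 1)) •
            (ContinuousLinearMap.proj j : ((Fin d) → ℝ) →L[ℝ] ℝ)))) y :=
    fun y => HasFDerivAt.fun_sum (fun κ _ => (hmono κ y).const_mul (a κ))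
  -- value of fderiv at Pi.single i 1
  have hval : ∀ y : Fin d → ℝ,
      fderiv ℝ (fun y : Fin d → ℝ => ∑ κ ∈ A, a κ * ∏ j, (y j - b j) ^ κ j) y
        (Pi.single i 1)
      = ∑ κ ∈ A, a κ * ((κ i : ℝ) * (y i - b i) ^ (κ i - 1) *
          ∏ k ∈ univ.erase i, (y k - b k) ^ κ k) := by
    intro y
    rw [(hF' y).fderiv]
    simp only [ContinuousLinearMap.coe_sum', Finset.sum_apply,
      ContinuousLinearMap.coe_smul', Pi.smul_apply, ContinuousLinearMap.proj_apply,
      smul_eq_mul]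
    refine Finset.sum_congr rfl (fun κ _ => ?_)
    rw [Finset.sum_eq_single i]
    · rw [Pi.single_eq_same]; ring
    · intro j _ hji
      simp [Pi.single_apply, hji]
    · simp
  have hyk : ∀ (α : ℝ) (k : Fin d), (b + α • (x - b)) k - b k = α * (x k - b k) := by
    intro α k
    simp only [Pi.add_apply, Pi.smul_apply, Pi.sub_apply, smul_eq_mul]
    ring
  have hint : ∀ α : ℝ,
      fderiv ℝ (fun y : Fin d → ℝ => ∑ κ ∈ A, a κ * ∏ j, (y j - b j) ^ κ j)
        (b + α • (x - b)) (Pi.single i 1)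
      = ∑ κ ∈ A, a κ * ((κ i : ℝ) * (α * (x i - b i)) ^ (κ i - 1) *
          ∏ k ∈ univ.erase i, (α * (x k - b k)) ^ κ k) := by
    intro α
    rw [hval]
    simp only [hyk]
  have hg : ∀ κ ∈ A, IntervalIntegrable
      (fun α : ℝ => a κ * ((κ i : ℝ) * (α * (x i - b i)) ^ (κ i - 1) *
        ∏ k ∈ univ.erase i, (α * (x k - b k)) ^ κ k)) MeasureTheory.volume 0 1 := by
    intro κ _
    apply Continuous.intervalIntegrable
    fun_prop
  rw [intervalIntegral.integral_congr (fun α _ => hint α),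
    intervalIntegral.integral_finset_sum hg, Finset.mul_sum]
  rw [← Finset.sum_filter_of_ne (p := fun κ => 0 < κ i) (f := fun κ =>
      (x i - b i) * ∫ α in (0:ℝ)..1, a κ * ((κ i : ℝ) * (α * (x i - b i)) ^ (κ i - 1) *
        ∏ k ∈ univ.erase i, (α * (x k - b k)) ^ κ k)) ?_]
  · refine Finset.sum_congr rfl (fun κ hκ => ?_)
    have hκi : 0 < κ i := (Finset.mem_filter.mp hκ).2
    have hNs : κ i - 1 + ∑ k ∈ univ.erase i, κ k = (∑ j, κ j) - 1 := by
      rw [← Finset.add_sum_erase _ κ (Finset.mem_univ i)]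
      omega
    have hintegrand : ∀ α : ℝ,
        a κ * ((κ i : ℝ) * (α * (x i - b i)) ^ (κ i - 1) *
          ∏ k ∈ univ.erase i, (α * (x k - b k)) ^ κ k)
        = (a κ * (κ i : ℝ) * (x i - b i) ^ (κ i - 1) *
            ∏ k ∈ univ.erase i, (x k - b k) ^ κ k) * α ^ ((∑ j, κ j) - 1) := by
      intro α
      simp only [mul_pow, Finset.prod_mul_distrib, Finset.prod_pow_eq_pow_sum]
      rw [← hNs, pow_add]
      ring
    simp only [hintegrand]
    rw [intervalIntegral.integral_const_mul, integral_pow]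
    have hNpos : 0 < ∑ j, κ j :=
      lt_of_lt_of_le hκi (Finset.single_le_sum (fun _ _ => Nat.zero_le _) (Finset.mem_univ i))
    have hN1 : (∑ j, κ j) - 1 + 1 = ∑ j, κ j := by omega
    rw [hN1]
    have hden : (((∑ j, κ j) - 1 : ℕ) : ℝ) + 1 = ∑ j, (κ j : ℝ) := by
      rw [← Nat.cast_add_one, hN1]
      push_cast
      rfl
    have hxpow : (x i - b i) * (x i - b i) ^ (κ i - 1) = (x i - b i) ^ κ i := by
      rw [← pow_succ']
      congr 1
      omega
    have hprod : ∏ j, (x j - b j) ^ κ j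
        = (x i - b i) ^ κ i * ∏ k ∈ univ.erase i, (x k - b k) ^ κ k :=
      (Finset.mul_prod_erase _ _ (Finset.mem_univ i)).symm
    rw [hden, hprod, ← hxpow, one_pow, zero_pow hNpos.ne']
    rw [div_eq_mul_inv, div_eq_mul_inv]
    ring
  · intro κ _ hne
    by_contra hκi
    apply hne
    have : κ i = 0 := Nat.eq_zero_of_not_pos hκi
    simp [this]
end

section
/- Let d ∈ ℕ, b, x ∈ ℝ^d, and let F : ℝ^d → ℝ be given by F(y) = Σ_{κ ∈ A} a_κ · Π_{l=1}^d (y_l − b_l)^{κ_l} for a finite set A ⊆ ℕ^d and coefficients a_κ ∈ ℝ. Then for any two distinct coordinates i ≠ j, the Integrated Hessians attribution satisfies (x_i − b_i)(x_j − b_j) · ∫_0^1 ∫_0^1 α_i α_j · ∂_i∂_j F(b + α_i α_j ·(x − b)) dα_i dα_j = Σ_{κ ∈ A : κ_i > 0, κ_j > 0} (κ_i κ_j / |κ|²) · a_κ · Π_{l=1}^d (x_l − b_l)^{κ_l}, where ∂_i∂_j F denotes the second-order mixed partial derivative and |κ| := Σ_{l=1}^d κ_l. (Integrated Hessians is a partial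 pairwise interaction effect with weight κ_iκ_j/|κ|² on each Taylor interaction term.) -/
open Finset

noncomputable def Dmap {d : ℕ} (b : Fin d → ℝ) (κ : Fin d → ℕ) (y : Fin d → ℝ) :
    (Fin d → ℝ) →L[ℝ] ℝ :=
  ∑ l, (∏ m ∈ univ.erase l, (y m - b m) ^ κ m) •
    (((κ l : ℝ) * (y l - b l) ^ (κ l - 1)) •
      (ContinuousLinearMap.proj l : (Fin d → ℝ) →L[ℝ] ℝ))

lemma prod_hasFDerivAt {d : ℕ} (b : Fin d → ℝ) (κ : Fin d → ℕ) (y : Fin d → ℝ) :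
    HasFDerivAt (fun y : Fin d → ℝ => ∏ l, (y l - b l) ^ κ l) (Dmap b κ y) y := by
  have h : ∀ l ∈ (univ : Finset (Fin d)),
      HasFDerivAt (fun y : Fin d → ℝ => (y l - b l) ^ κ l)
        (((κ l : ℝ) * (y l - b l) ^ (κ l - 1)) •
          (ContinuousLinearMap.proj l : (Fin d → ℝ) →L[ℝ] ℝ)) y := by
    intro l _
    have h1 : HasFDerivAt (fun y : Fin d → ℝ => y l - b l)
        (ContinuousLinearMap.proj l : (Fin d → ℝ) →L[ℝ] ℝ) y :=
      ((ContinuousLinearMap.proj l : (Fin d → ℝ) →L[ℝ] ℝ).hasFDerivAt).sub_const (b l)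
    have h2 : HasDerivAt (fun t : ℝ => t ^ κ l) ((κ l : ℝ) * (y l - b l) ^ (κ l - 1)) (y l - b l) :=
      hasDerivAt_pow (κ l) (y l - b l)
    simpa [Function.comp_def] using h2.comp_hasFDerivAt y h1
  exact HasFDerivAt.finset_prod h

lemma prod_update_pow {d : ℕ} (f : Fin d → ℝ) (κ : Fin d → ℕ) (j : Fin d) (c : ℕ) :
    ∏ m, f m ^ (Function.update κ j c m) = f j ^ c * ∏ m ∈ univ.erase j, f m ^ κ m := by
  rw [← Finset.mul_prod_erase _ _ (mem_univ j), Function.update_self]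
  congr 1
  exact Finset.prod_congr rfl fun m hm => by
    rw [Function.update_of_ne (Finset.ne_of_mem_erase hm)]

lemma Dmap_apply {d : ℕ} (b : Fin d → ℝ) (κ : Fin d → ℕ) (y : Fin d → ℝ) (j : Fin d) :
    Dmap b κ y (Pi.single j 1) =
      (κ j : ℝ) * ∏ m, (y m - b m) ^ (Function.update κ j (κ j - 1) m) := by
  unfold Dmap
  rw [ContinuousLinearMap.sum_apply, Finset.sum_eq_single j]
  · rw [prod_update_pow]
    simp [mul_comm, mul_assoc, mul_left_comm]
  · intro l _ hl
    simp [ContinuousLinearMap.proj_apply, Pi.single_eq_of_ne hl]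
  · simp

lemma sum_prod_fderiv_apply {d : ℕ} (b : Fin d → ℝ) {ι : Type*} [DecidableEq ι]
    (A : Finset ι) (c : ι → ℝ) (κ : ι → Fin d → ℕ) (y : Fin d → ℝ) (i : Fin d) :
    fderiv ℝ (fun y => ∑ t ∈ A, c t * ∏ m, (y m - b m) ^ κ t m) y (Pi.single i 1)
      = ∑ t ∈ A, c t * ((κ t i : ℝ) *
          ∏ m, (y m - b m) ^ (Function.update (κ t) i (κ t i - 1) m)) := by
  have h : HasFDerivAt (fun y : Fin d → ℝ => ∑ t ∈ A, c t * ∏ m, (y m - b m) ^ κ t m)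
      (∑ t ∈ A, c t • Dmap b (κ t) y) y :=
    HasFDerivAt.fun_sum fun t _ => (prod_hasFDerivAt b (κ t) y).const_mul (c t)
  rw [h.fderiv, ContinuousLinearMap.sum_apply]
  exact Finset.sum_congr rfl fun t _ => by
    rw [ContinuousLinearMap.smul_apply, Dmap_apply]; simp

lemma split_ij_prod {d : ℕ} (f : Fin d → ℝ) (g : Fin d → ℕ) (i j : Fin d) (hij : i ≠ j) :
    ∏ m, f m ^ g m = f i ^ g i * (f j ^ g j * ∏ m ∈ (univ.erase i).erase j, f m ^ g m) := by
  rw [← Finset.mul_prod_erase _ _ (mem_univ i),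
    ← Finset.mul_prod_erase _ _ (Finset.mem_erase.mpr ⟨hij.symm, mem_univ j⟩)]

lemma split_ij_sum {d : ℕ} (g : Fin d → ℕ) (i j : Fin d) (hij : i ≠ j) :
    ∑ m, g m = g i + (g j + ∑ m ∈ (univ.erase i).erase j, g m) := by
  rw [← Finset.add_sum_erase _ _ (mem_univ i),
    ← Finset.add_sum_erase _ _ (Finset.mem_erase.mpr ⟨hij.symm, mem_univ j⟩)]

/-- Integrated Hessians on a Taylor-type expansion: for
`F(y) = Σ_{κ ∈ A} a_κ Π_l (y_l − b_l)^{κ_l}` and distinct coordinates `i ≠ j`,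
`(x_i−b_i)(x_j−b_j) ∫_0^1∫_0^1 α_i α_j ∂_i∂_j F(b + α_iα_j(x−b)) dα_i dα_j
  = Σ_{κ : κ_i>0, κ_j>0} (κ_iκ_j/|κ|²) a_κ Π_l (x_l − b_l)^{κ_l}`. -/
theorem integrated_hessians_eq_weighted_taylor (d : ℕ) (b x : Fin d → ℝ)
    (A : Finset (Fin d → ℕ)) (a : (Fin d → ℕ) → ℝ) (F : (Fin d → ℝ) → ℝ)
    (hF : ∀ y : Fin d → ℝ, F y = ∑ κ ∈ A, a κ * ∏ l, (y l - b l) ^ κ l)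
    (i j : Fin d) (hij : i ≠ j) :
    (x i - b i) * (x j - b j) *
        ∫ αi in (0:ℝ)..1, ∫ αj in (0:ℝ)..1, αi * αj *
          fderiv ℝ (fun y => fderiv ℝ F y (Pi.single j 1))
            (b + (αi * αj) • (x - b)) (Pi.single i 1) =
      ∑ κ ∈ A.filter (fun κ => 0 < κ i ∧ 0 < κ j),
        ((κ i : ℝ) * (κ j : ℝ) / (∑ l, (κ l : ℝ)) ^ 2) * a κ *
          ∏ l, (x l - b l) ^ κ l := by
  classical
  set e : (Fin d → ℕ) → Fin d → ℕ :=
    fun κ => Function.update (Function.update κ j (κ j - 1)) i (κ i - 1) with he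
  set N : (Fin d → ℕ) → ℕ := fun κ => ∑ m, e κ m with hN
  set P : (Fin d → ℕ) → ℝ := fun κ => ∏ m, (x m - b m) ^ e κ m with hP
  set c : (Fin d → ℕ) → ℝ := fun κ => a κ * (κ j : ℝ) * (κ i : ℝ) with hc
  set A' : Finset (Fin d → ℕ) := A.filter (fun κ => 0 < κ i ∧ 0 < κ j) with hA'
  have hei : ∀ κ, e κ i = κ i - 1 := fun κ => Function.update_self _ _ _
  have hej : ∀ κ, e κ j = κ j - 1 := by
    intro κ
    rw [he]
    simp only []
    rw [Function.update_of_ne hij.symm, Function.update_self]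
  have hem : ∀ κ, ∀ m, m ≠ i → m ≠ j → e κ m = κ m := by
    intro κ m hmi hmj
    rw [he]
    simp only []
    rw [Function.update_of_ne hmi, Function.update_of_ne hmj]
  -- key pointwise formula for the second derivative
  have key : ∀ t : ℝ,
      fderiv ℝ (fun y => fderiv ℝ F y (Pi.single j 1)) (b + t • (x - b)) (Pi.single i 1)
        = ∑ κ ∈ A', c κ * (t ^ N κ * P κ) := by
    intro t
    have hFe : F = fun y => ∑ κ ∈ A, a κ * ∏ l, (y l - b l) ^ κ l := funext hF
    have step1 : (fun y => fderiv ℝ F y (Pi.single j 1))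
        = fun y => ∑ κ ∈ A, (a κ * (κ j : ℝ)) *
            ∏ m, (y m - b m) ^ (Function.update κ j (κ j - 1) m) := by
      funext y
      rw [hFe, sum_prod_fderiv_apply b A a (fun κ => κ) y j]
      exact Finset.sum_congr rfl fun κ _ => by ring
    rw [step1, sum_prod_fderiv_apply b A (fun κ => a κ * (κ j : ℝ))
      (fun κ => Function.update κ j (κ j - 1)) _ i]
    have hupd : ∀ κ : Fin d → ℕ, Function.update κ j (κ j - 1) i = κ i :=
      fun κ => Function.update_of_ne hij _ _
    have hy : ∀ m, (b + t • (x - b)) m - b m = t * (x m - b m) := by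
      intro m
      simp [Pi.add_apply, Pi.smul_apply, Pi.sub_apply, smul_eq_mul]
    rw [← Finset.sum_filter_of_ne (p := fun κ => 0 < κ i ∧ 0 < κ j)]
    · refine Finset.sum_congr rfl fun κ hκ => ?_
      rw [hupd]
      have heq : Function.update (Function.update κ j (κ j - 1)) i (κ i - 1) = e κ := rfl
      rw [heq]
      have hprod : ∏ m, ((b + t • (x - b)) m - b m) ^ e κ m = t ^ N κ * P κ := by
        calc ∏ m, ((b + t • (x - b)) m - b m) ^ e κ m
            = ∏ m, (t * (x m - b m)) ^ e κ m := by
              exact Finset.prod_congr rfl fun m _ => by rw [hy]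
          _ = (∏ m, t ^ e κ m) * ∏ m, (x m - b m) ^ e κ m := by
              simp_rw [mul_pow]; rw [Finset.prod_mul_distrib]
          _ = t ^ N κ * P κ := by rw [Finset.prod_pow_eq_pow_sum]
      rw [hprod, hc]
      ring
    · intro κ _ hne
      by_contra hcon
      apply hne
      rcases Nat.eq_zero_or_pos (κ i) with hzi | hpi
      · simp [hupd, hzi]
      rcases Nat.eq_zero_or_pos (κ j) with hzj | hpj
      · simp [hzj]
      exact absurd ⟨hpi, hpj⟩ hcon
  have hNn : ∀ κ ∈ A', N κ + 2 = ∑ l, κ l := by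
    intro κ hκ
    obtain ⟨hκA, hpi, hpj⟩ : κ ∈ A ∧ 0 < κ i ∧ 0 < κ j := by
      simpa [hA', Finset.mem_filter, and_assoc] using hκ
    have h1 := split_ij_sum (e κ) i j hij
    have h2 := split_ij_sum κ i j hij
    have h3 : ∑ m ∈ (univ.erase i).erase j, e κ m
        = ∑ m ∈ (univ.erase i).erase j, κ m := by
      refine Finset.sum_congr rfl fun m hm => ?_
      exact hem κ m (Finset.mem_erase.mp (Finset.mem_erase.mp hm).2).1
        (Finset.mem_erase.mp hm).1
    have h4 := hei κ
    have h5 := hej κ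
    have hgoal : N κ = ∑ m, e κ m := rfl
    rw [hgoal, h1, h3, h4, h5, h2]
    omega
  simp only [key]
  have hinner : ∀ αi : ℝ,
      (∫ αj in (0:ℝ)..1, αi * αj * ∑ κ ∈ A', c κ * ((αi * αj) ^ N κ * P κ))
        = ∑ κ ∈ A', (c κ * P κ / ((N κ : ℝ) + 2)) * αi ^ (N κ + 1) := by
    intro αi
    have hfun : (fun αj : ℝ => αi * αj * ∑ κ ∈ A', c κ * ((αi * αj) ^ N κ * P κ))
        = fun αj : ℝ => ∑ κ ∈ A', (c κ * P κ * αi ^ (N κ + 1)) * αj ^ (N κ + 1) := by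
      funext αj
      rw [Finset.mul_sum]
      refine Finset.sum_congr rfl fun κ _ => ?_
      simp only [mul_pow]
      ring
    rw [hfun, intervalIntegral.integral_finset_sum
      (f := fun κ αj => c κ * P κ * αi ^ (N κ + 1) * αj ^ (N κ + 1)) (fun κ _ => ((continuous_const.mul (continuous_pow _)).intervalIntegrable 0 1))]
    refine Finset.sum_congr rfl fun κ _ => ?_
    rw [intervalIntegral.integral_const_mul, integral_pow]
    have : ((N κ + 1 : ℕ) : ℝ) + 1 = (N κ : ℝ) + 2 := by push_cast; ring
    rw [this]
    simp
    ring
  simp only [hinner]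
  rw [intervalIntegral.integral_finset_sum
    (f := fun κ αi => c κ * P κ / ((N κ : ℝ) + 2) * αi ^ (N κ + 1)) (fun κ _ => ((continuous_const.mul (continuous_pow _)).intervalIntegrable 0 1))]
  have houter : ∀ κ ∈ A',
      (∫ αi in (0:ℝ)..1, (c κ * P κ / ((N κ : ℝ) + 2)) * αi ^ (N κ + 1))
        = (c κ * P κ / ((N κ : ℝ) + 2)) * (1 / ((N κ : ℝ) + 2)) := by
    intro κ _
    rw [intervalIntegral.integral_const_mul, integral_pow]
    have : ((N κ + 1 : ℕ) : ℝ) + 1 = (N κ : ℝ) + 2 := by push_cast; ring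
    rw [this]
    simp
  rw [Finset.sum_congr rfl houter, Finset.mul_sum]
  refine Finset.sum_congr rfl fun κ hκ => ?_
  obtain ⟨hκA, hpi, hpj⟩ : κ ∈ A ∧ 0 < κ i ∧ 0 < κ j := by
    simpa [hA', Finset.mem_filter, and_assoc] using hκ
  have hsumcast : (∑ l, (κ l : ℝ)) = (N κ : ℝ) + 2 := by
    have h := hNn κ hκ
    have : ((N κ + 2 : ℕ) : ℝ) = ((∑ l, κ l : ℕ) : ℝ) := by rw [h]
    push_cast at this
    linarith
  have hprodsplit : ∏ l, (x l - b l) ^ κ l = (x i - b i) * (x j - b j) * P κ := by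
    have hPsplit : P κ = (x i - b i) ^ (κ i - 1) *
        ((x j - b j) ^ (κ j - 1) * ∏ m ∈ (univ.erase i).erase j, (x m - b m) ^ κ m) := by
      rw [hP]
      simp only []
      rw [split_ij_prod _ (e κ) i j hij, hei, hej]
      congr 2
      refine Finset.prod_congr rfl fun m hm => ?_
      rw [hem κ m (Finset.mem_erase.mp (Finset.mem_erase.mp hm).2).1
        (Finset.mem_erase.mp hm).1]
    rw [split_ij_prod _ κ i j hij, hPsplit]
    have hki : (x i - b i) ^ κ i = (x i - b i) * (x i - b i) ^ (κ i - 1) := by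
      conv_lhs => rw [← Nat.sub_add_cancel hpi]
      rw [pow_succ]
      ring
    have hkj : (x j - b j) ^ κ j = (x j - b j) * (x j - b j) ^ (κ j - 1) := by
      conv_lhs => rw [← Nat.sub_add_cancel hpj]
      rw [pow_succ]
      ring
    rw [hki, hkj]
    ring
  rw [hprodsplit, hsumcast]
  have hne : (N κ : ℝ) + 2 ≠ 0 := by positivity
  rw [hc]
  field_simp
end
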